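/- arXiv:2002.10135 — 11 statements merged into one kernel-verified Lean document; each statement's English description precedes it below -/
import Mathlib

section
/- A map 𝒱 : [0,1] → [0,1] has the v-transform properties with some fulcrum δ ∈ (0,1) if and only if there exist δ ∈ (0,1) and a continuous strictly increasing distribution function Ψ on [0,1] (Ψ continuous, strictly increasing, Ψ(0)=0, Ψ(1)=1) such that 𝒱(u) = (1−u) − (1−δ)·Ψ(u/δ) for u ≤ δ and 𝒱(u) = u − δ·Ψ⁻¹((1−u)/(1−δ)) for u > δ. -/
/-!
By the square property the dual point of `u` is `u + V u` on the left branch and `u - V u`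
on the right; since `V` takes the same value at `u` and at its dual, these two maps are
mutually inverse decreasing bijections `[0, δ] ≃ [δ, 1]`. Read in the coordinates
`x = u / δ` and `y = (1 - u) / (1 - δ)`, the map `u ↦ u + V u` becomes a continuous
increasing bijection `Ψ` of `[0, 1]` and `u ↦ u - V u` becomes `Ψ⁻¹`; the two branch
formulas are then the identities `V u = (u + V u) - u` and `V u = u - (u - V u)`.
Conversely, given `Ψ`, the formulas make `u ↦ u ± V u` mutually inverse, which is the
square property, while monotonicity and continuity of `V` come from those of `Ψ` and `Ψ⁻¹`.
-/

open Set

def IsVTransform (V : ℝ → ℝ) (δ : ℝ) : Prop :=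
  δ ∈ Ioo (0:ℝ) 1 ∧
  MapsTo V (Icc 0 1) (Icc 0 1) ∧
  V 0 = 1 ∧ V 1 = 1 ∧ V δ = 0 ∧
  ContinuousOn V (Icc 0 1) ∧
  StrictAntiOn V (Icc 0 δ) ∧
  StrictMonoOn V (Icc δ 1) ∧
  ∀ u ∈ Icc (0:ℝ) 1, u ≠ δ →
    ∃ us ∈ Icc (0:ℝ) 1, ((u < δ ∧ δ < us) ∨ (us < δ ∧ δ < u)) ∧
      V us = V u ∧ |us - u| = V u

theorem MonotoneOn.continuousOn_of_surjOn {α β : Type*} [LinearOrder α] [TopologicalSpace α]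
    [OrderTopology α] [LinearOrder β] [TopologicalSpace β] [OrderTopology β] [DenselyOrdered β]
    {f : α → β} {s : Set α} {t : Set β} [s.OrdConnected] [t.OrdConnected]
    (hf : MonotoneOn f s) (hmaps : MapsTo f s t) (hsurj : SurjOn f s t) : ContinuousOn f s := by
  have hmono : Monotone (hmaps.restrict f) := fun x y hxy => hf x.2 y.2 hxy
  have hcont : Continuous (hmaps.restrict f) :=
    hmono.continuous_of_surjective (hmaps.restrict_surjective_iff.mpr hsurj)
  exact continuousOn_iff_continuous_domRestrict.mpr (continuous_subtype_val.comp hcont)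

structure IsInvertibleCDF (Ψ Ψinv : ℝ → ℝ) : Prop where
  continuousOn : ContinuousOn Ψ (Icc 0 1)
  strictMonoOn : StrictMonoOn Ψ (Icc 0 1)
  map_zero : Ψ 0 = 0
  map_one : Ψ 1 = 1
  inv_apply : ∀ x ∈ Icc (0:ℝ) 1, Ψinv (Ψ x) = x
  apply_inv : ∀ x ∈ Icc (0:ℝ) 1, Ψ (Ψinv x) = x

namespace IsInvertibleCDF

variable {Ψ Ψinv : ℝ → ℝ}

theorem mapsTo (h : IsInvertibleCDF Ψ Ψinv) : MapsTo Ψ (Icc 0 1) (Icc 0 1) := fun _ hx =>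
  ⟨h.map_zero ▸ h.strictMonoOn.monotoneOn ⟨le_rfl, zero_le_one⟩ hx hx.1,
    h.map_one ▸ h.strictMonoOn.monotoneOn hx ⟨zero_le_one, le_rfl⟩ hx.2⟩

theorem surjOn (h : IsInvertibleCDF Ψ Ψinv) : SurjOn Ψ (Icc 0 1) (Icc 0 1) := by
  have := intermediate_value_Icc zero_le_one h.continuousOn
  rwa [h.map_zero, h.map_one] at this

theorem symm (h : IsInvertibleCDF Ψ Ψinv) : IsInvertibleCDF Ψinv Ψ := by
  have hmaps : MapsTo Ψinv (Icc 0 1) (Icc 0 1) := by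
    intro y hy
    obtain ⟨x, hx, rfl⟩ := h.surjOn hy
    rwa [h.inv_apply x hx]
  have hmono : StrictMonoOn Ψinv (Icc 0 1) := fun x hx y hy hxy =>
    (h.strictMonoOn.lt_iff_lt (hmaps hx) (hmaps hy)).mp
      (by rwa [h.apply_inv x hx, h.apply_inv y hy])
  have hsurj : SurjOn Ψinv (Icc 0 1) (Icc 0 1) := fun x hx =>
    ⟨Ψ x, h.mapsTo hx, h.inv_apply x hx⟩
  refine ⟨hmono.monotoneOn.continuousOn_of_surjOn hmaps hsurj, hmono, ?_, ?_,
    h.apply_inv, h.inv_apply⟩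
  · simpa only [h.map_zero] using h.inv_apply 0 ⟨le_rfl, zero_le_one⟩
  · simpa only [h.map_one] using h.inv_apply 1 ⟨zero_le_one, le_rfl⟩

end IsInvertibleCDF

namespace IsVTransform

variable {V : ℝ → ℝ} {δ u : ℝ}

theorem dual_left (hV : IsVTransform V δ) (hu : u ∈ Icc 0 δ) :
    u + V u ∈ Icc δ 1 ∧ V (u + V u) = V u := by
  obtain ⟨⟨-, hδ1⟩, -, -, -, hVδ, -, -, -, hsq⟩ := hV
  rcases hu.2.eq_or_lt with rfl | huδ
  · simp [hVδ, hδ1.le]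
  obtain ⟨us, hus, hside, hVus, habs⟩ := hsq u ⟨hu.1, by linarith⟩ huδ.ne
  have hδus : δ < us := hside.elim (·.2) fun h => absurd huδ h.2.not_gt
  obtain rfl : us = u + V u := by rw [← habs, abs_of_pos (by linarith)]; ring
  exact ⟨⟨hδus.le, hus.2⟩, hVus⟩

theorem dual_right (hV : IsVTransform V δ) (hu : u ∈ Icc δ 1) :
    u - V u ∈ Icc 0 δ ∧ V (u - V u) = V u := by
  obtain ⟨⟨hδ0, -⟩, -, -, -, hVδ, -, -, -, hsq⟩ := hV
  rcases hu.1.eq_or_lt with rfl | hδu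
  · simp [hVδ, hδ0.le]
  obtain ⟨us, hus, hside, hVus, habs⟩ := hsq u ⟨by linarith, hu.2⟩ hδu.ne'
  have husδ : us < δ := hside.elim (fun h => absurd hδu h.1.not_gt) (·.1)
  obtain rfl : us = u - V u := by rw [← habs, abs_of_neg (by linarith)]; ring
  exact ⟨⟨hus.1, husδ.le⟩, hVus⟩

theorem strictAntiOn_add_self (hV : IsVTransform V δ) :
    StrictAntiOn (fun u => u + V u) (Icc 0 δ) := by
  intro u hu u' hu' huu'
  obtain ⟨hw, hVw⟩ := hV.dual_left hu
  obtain ⟨hw', hVw'⟩ := hV.dual_left hu'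
  obtain ⟨-, -, -, -, -, -, hanti, hmono, -⟩ := hV
  have hlt : V (u' + V u') < V (u + V u) := by
    rw [hVw, hVw']
    exact hanti hu hu' huu'
  exact (hmono.lt_iff_lt hw' hw).mp hlt

end IsVTransform

/-- The left dual map `u ↦ u + V u : [0, δ] → [δ, 1]`, rescaled to `[0, 1] → [0, 1]` by
`u = δ x` and `y = (1 - (u + V u)) / (1 - δ)`. -/
noncomputable def vGenerator (V : ℝ → ℝ) (δ x : ℝ) : ℝ :=
  (1 - (δ * x + V (δ * x))) / (1 - δ)

/-- The right dual map `w ↦ w - V w`, rescaled in the same coordinates. -/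
noncomputable def vGeneratorInv (V : ℝ → ℝ) (δ y : ℝ) : ℝ :=
  (1 - (1 - δ) * y - V (1 - (1 - δ) * y)) / δ

section Generator

variable {V : ℝ → ℝ} {δ : ℝ}

theorem apply_eq_one_sub_sub_mul_vGenerator (hδ₀ : δ ≠ 0) (hδ₁ : 1 - δ ≠ 0) (u : ℝ) :
    V u = (1 - u) - (1 - δ) * vGenerator V δ (u / δ) := by
  rw [vGenerator, mul_div_cancel₀ u hδ₀, mul_div_cancel₀ _ hδ₁]
  ring

theorem apply_eq_sub_mul_vGeneratorInv (hδ₀ : δ ≠ 0) (hδ₁ : 1 - δ ≠ 0) (u : ℝ) :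
    V u = u - δ * vGeneratorInv V δ ((1 - u) / (1 - δ)) := by
  rw [vGeneratorInv, mul_div_cancel₀ _ hδ₁, sub_sub_cancel, mul_div_cancel₀ _ hδ₀]
  ring

theorem IsVTransform.isInvertibleCDF_vGenerator (hV : IsVTransform V δ) :
    IsInvertibleCDF (vGenerator V δ) (vGeneratorInv V δ) := by
  have hanti := hV.strictAntiOn_add_self
  have hL : ∀ u ∈ Icc 0 δ, V (u + V u) = V u := fun u hu => (hV.dual_left hu).2
  have hR : ∀ u ∈ Icc δ 1, V (u - V u) = V u := fun u hu => (hV.dual_right hu).2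
  obtain ⟨⟨hδ0, hδ1⟩, -, hV0, -, hVδ, hcont, -⟩ := hV
  have hδ1' : 0 < 1 - δ := sub_pos.2 hδ1
  have hscale : MapsTo (δ * ·) (Icc 0 1) (Icc 0 δ) := fun x hx =>
    ⟨mul_nonneg hδ0.le hx.1, mul_le_of_le_one_right hδ0.le hx.2⟩
  refine ⟨?_, ?_, by simp [vGenerator, hV0], ?_, ?_, ?_⟩
  · have hmul : ContinuousOn (δ * ·) (Icc (0:ℝ) 1) := (continuous_const_mul δ).continuousOn
    exact (continuousOn_const.sub (hmul.add (hcont.comp hmul fun x hx =>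
      Icc_subset_Icc_right hδ1.le (hscale hx)))).div_const _
  · intro x hx y hy hxy
    exact div_lt_div_of_pos_right (sub_lt_sub_left
      (hanti (hscale hx) (hscale hy) (mul_lt_mul_of_pos_left hxy hδ0)) 1) hδ1'
  · rw [vGenerator, mul_one, hVδ, add_zero, div_self hδ1'.ne']
  · intro x hx
    have hw : 1 - (1 - δ) * vGenerator V δ x = δ * x + V (δ * x) := by
      rw [vGenerator, mul_div_cancel₀ _ hδ1'.ne']
      ring
    rw [vGeneratorInv, hw, hL _ (hscale hx), add_sub_cancel_right,
      mul_div_cancel_left₀ x hδ0.ne']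
  · intro y hy
    have hw : 1 - (1 - δ) * y ∈ Icc δ 1 :=
      ⟨by nlinarith [hy.2], by nlinarith [hy.1]⟩
    have hu : δ * vGeneratorInv V δ y = 1 - (1 - δ) * y - V (1 - (1 - δ) * y) :=
      mul_div_cancel₀ _ hδ0.ne'
    rw [vGenerator, hu, hR _ hw, sub_add_cancel, sub_sub_cancel,
      mul_div_cancel_left₀ y hδ1'.ne']

end Generator

section Branches

variable {V Ψ Ψinv : ℝ → ℝ} {δ u : ℝ}

theorem mapsTo_Icc_of_antitoneOn_of_monotoneOn (hδ : δ ∈ Icc (0:ℝ) 1) (hV0 : V 0 = 1)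
    (hV1 : V 1 = 1) (hVδ : V δ = 0) (hanti : AntitoneOn V (Icc 0 δ))
    (hmono : MonotoneOn V (Icc δ 1)) : MapsTo V (Icc 0 1) (Icc 0 1) := by
  intro u hu
  rcases le_total u δ with huδ | hδu
  · exact ⟨hVδ ▸ hanti ⟨hu.1, huδ⟩ ⟨hδ.1, le_rfl⟩ huδ,
      hV0 ▸ hanti ⟨le_rfl, hδ.1⟩ ⟨hu.1, huδ⟩ hu.1⟩
  · exact ⟨hVδ ▸ hmono ⟨le_rfl, hδ.2⟩ ⟨hδu, hu.2⟩ hδu,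
      hV1 ▸ hmono ⟨hδu, hu.2⟩ ⟨hδ.2, le_rfl⟩ hu.2⟩

theorem square_property_of_duals (hVδ : V δ = 0) (hnonneg : ∀ u ∈ Icc (0:ℝ) 1, 0 ≤ V u)
    (hL : ∀ u ∈ Icc 0 δ, u + V u ∈ Icc δ 1 ∧ V (u + V u) = V u)
    (hR : ∀ u ∈ Icc δ 1, u - V u ∈ Icc 0 δ ∧ V (u - V u) = V u) :
    ∀ u ∈ Icc (0:ℝ) 1, u ≠ δ →
      ∃ us ∈ Icc (0:ℝ) 1, ((u < δ ∧ δ < us) ∨ (us < δ ∧ δ < u)) ∧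
        V us = V u ∧ |us - u| = V u := by
  intro u hu hne
  have hVu := hnonneg u hu
  rcases hne.lt_or_gt with huδ | hδu
  · obtain ⟨hw, hVw⟩ := hL u ⟨hu.1, huδ.le⟩
    -- if the dual point were `δ`, then `V u = V δ = 0` would force `u = δ`
    have hδw : δ < u + V u := hw.1.lt_of_ne fun h => by
      rw [← h, hVδ] at hVw
      exact hne (by linarith)
    refine ⟨u + V u, ⟨add_nonneg hu.1 hVu, hw.2⟩, .inl ⟨huδ, hδw⟩, hVw, ?_⟩
    rw [add_sub_cancel_left, abs_of_nonneg hVu]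
  · obtain ⟨hw, hVw⟩ := hR u ⟨hδu.le, hu.2⟩
    have hwδ : u - V u < δ := hw.2.lt_of_ne fun h => by
      rw [h, hVδ] at hVw
      exact hne (by linarith)
    refine ⟨u - V u, ⟨hw.1, by linarith [hw.2, hu.2]⟩, .inr ⟨hwδ, hδu⟩, hVw, ?_⟩
    rw [sub_sub_cancel_left, abs_neg, abs_of_nonneg hVu]

theorem strictAntiOn_of_eq_left (hδ : δ ∈ Ioo (0:ℝ) 1) (hΨ : MonotoneOn Ψ (Icc 0 1))
    (hleft : ∀ u ∈ Icc 0 δ, V u = (1 - u) - (1 - δ) * Ψ (u / δ)) :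
    StrictAntiOn V (Icc 0 δ) := by
  intro u hu v hv huv
  have hΨuv : Ψ (u / δ) ≤ Ψ (v / δ) :=
    hΨ (unitInterval.div_mem hu.1 hδ.1.le hu.2) (unitInterval.div_mem hv.1 hδ.1.le hv.2)
      (div_le_div_of_nonneg_right huv.le hδ.1.le)
  have := mul_le_mul_of_nonneg_left hΨuv (sub_nonneg.2 hδ.2.le)
  rw [hleft u hu, hleft v hv]
  linarith

theorem strictMonoOn_of_eq_right (hδ : δ ∈ Ioo (0:ℝ) 1) (hΨinv : MonotoneOn Ψinv (Icc 0 1))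
    (hright : ∀ u ∈ Icc δ 1, V u = u - δ * Ψinv ((1 - u) / (1 - δ))) :
    StrictMonoOn V (Icc δ 1) := by
  intro u hu v hv huv
  have hmem : ∀ w ∈ Icc δ 1, (1 - w) / (1 - δ) ∈ Icc (0:ℝ) 1 := fun w hw =>
    unitInterval.div_mem (sub_nonneg.2 hw.2) (sub_nonneg.2 hδ.2.le) (by linarith [hw.1])
  have hΨuv : Ψinv ((1 - v) / (1 - δ)) ≤ Ψinv ((1 - u) / (1 - δ)) :=
    hΨinv (hmem v hv) (hmem u hu)
      (div_le_div_of_nonneg_right (by linarith) (sub_nonneg.2 hδ.2.le))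
  have := mul_le_mul_of_nonneg_left hΨuv hδ.1.le
  rw [hright u hu, hright v hv]
  linarith

theorem continuousOn_of_eq_left (hδ : 0 < δ) (hΨ : ContinuousOn Ψ (Icc 0 1))
    (hleft : ∀ u ∈ Icc 0 δ, V u = (1 - u) - (1 - δ) * Ψ (u / δ)) :
    ContinuousOn V (Icc 0 δ) :=
  ContinuousOn.congr ((continuousOn_const.sub continuousOn_id).sub (continuousOn_const.mul
    (hΨ.comp (continuousOn_id.div_const δ) fun _ hu => unitInterval.div_mem hu.1 hδ.le hu.2)))
    hleft

theorem continuousOn_of_eq_right (hδ : δ < 1) (hΨinv : ContinuousOn Ψinv (Icc 0 1))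
    (hright : ∀ u ∈ Icc δ 1, V u = u - δ * Ψinv ((1 - u) / (1 - δ))) :
    ContinuousOn V (Icc δ 1) :=
  ContinuousOn.congr (continuousOn_id.sub (continuousOn_const.mul
    (hΨinv.comp ((continuousOn_const.sub continuousOn_id).div_const (1 - δ)) fun u hu =>
      show (1 - u) / (1 - δ) ∈ Icc 0 1 from
        unitInterval.div_mem (sub_nonneg.2 hu.2) (sub_nonneg.2 hδ.le) (by linarith [hu.1]))))
    hright

theorem dual_left_of_eq (hδ : δ ∈ Ioo (0:ℝ) 1) (hΨ : IsInvertibleCDF Ψ Ψinv)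
    (hleft : ∀ u ∈ Icc 0 δ, V u = (1 - u) - (1 - δ) * Ψ (u / δ))
    (hright : ∀ u ∈ Icc δ 1, V u = u - δ * Ψinv ((1 - u) / (1 - δ))) (hu : u ∈ Icc 0 δ) :
    u + V u ∈ Icc δ 1 ∧ V (u + V u) = V u := by
  have hx := unitInterval.div_mem hu.1 hδ.1.le hu.2
  have hΨx := hΨ.mapsTo hx
  have hw : u + V u = 1 - (1 - δ) * Ψ (u / δ) := by
    rw [hleft u hu]
    ring
  have hmem : u + V u ∈ Icc δ 1 := by
    rw [hw]
    constructor <;> nlinarith [hΨx.1, hΨx.2, hδ.2]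
  refine ⟨hmem, ?_⟩
  rw [hright _ hmem, hw, sub_sub_cancel, mul_div_cancel_left₀ _ (sub_pos.2 hδ.2).ne',
    hΨ.inv_apply _ hx, mul_div_cancel₀ _ hδ.1.ne', hleft u hu]
  ring

theorem dual_right_of_eq (hδ : δ ∈ Ioo (0:ℝ) 1) (hΨ : IsInvertibleCDF Ψ Ψinv)
    (hleft : ∀ u ∈ Icc 0 δ, V u = (1 - u) - (1 - δ) * Ψ (u / δ))
    (hright : ∀ u ∈ Icc δ 1, V u = u - δ * Ψinv ((1 - u) / (1 - δ))) (hu : u ∈ Icc δ 1) :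
    u - V u ∈ Icc 0 δ ∧ V (u - V u) = V u := by
  have hy := unitInterval.div_mem (sub_nonneg.2 hu.2) (sub_nonneg.2 hδ.2.le) (by linarith [hu.1])
  have hΨy := hΨ.symm.mapsTo hy
  have hw : u - V u = δ * Ψinv ((1 - u) / (1 - δ)) := by
    rw [hright u hu]
    ring
  have hmem : u - V u ∈ Icc 0 δ := by
    rw [hw]
    constructor <;> nlinarith [hΨy.1, hΨy.2, hδ.1]
  refine ⟨hmem, ?_⟩
  rw [hleft _ hmem, hw, mul_div_cancel_left₀ _ hδ.1.ne', hΨ.apply_inv _ hy,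
    mul_div_cancel₀ _ (sub_pos.2 hδ.2).ne', hright u hu]
  ring

theorem IsInvertibleCDF.isVTransform (hδ : δ ∈ Ioo (0:ℝ) 1)
    (hΨ : IsInvertibleCDF Ψ Ψinv)
    (hV : ∀ u ∈ Icc (0:ℝ) 1, (u ≤ δ → V u = (1 - u) - (1 - δ) * Ψ (u / δ)) ∧
      (δ < u → V u = u - δ * Ψinv ((1 - u) / (1 - δ)))) :
    IsVTransform V δ := by
  have hδ1 : 1 - δ ≠ 0 := (sub_pos.2 hδ.2).ne'
  have hleft : ∀ u ∈ Icc 0 δ, V u = (1 - u) - (1 - δ) * Ψ (u / δ) := fun u hu =>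
    (hV u ⟨hu.1, hu.2.trans hδ.2.le⟩).1 hu.2
  have hVδ : V δ = 0 := by
    rw [hleft δ ⟨hδ.1.le, le_rfl⟩, div_self hδ.1.ne', hΨ.map_one]
    ring
  have hright : ∀ u ∈ Icc δ 1, V u = u - δ * Ψinv ((1 - u) / (1 - δ)) := by
    rintro u ⟨hδu, hu1⟩
    rcases hδu.eq_or_lt with rfl | hlt
    · rw [hVδ, div_self hδ1, hΨ.symm.map_one]
      ring
    · exact (hV u ⟨hδ.1.le.trans hδu, hu1⟩).2 hlt
  have hV0 : V 0 = 1 := by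
    rw [hleft 0 ⟨le_rfl, hδ.1.le⟩, zero_div, hΨ.map_zero]
    ring
  have hV1 : V 1 = 1 := by
    rw [hright 1 ⟨hδ.2.le, le_rfl⟩, sub_self, zero_div, hΨ.symm.map_zero]
    ring
  have hanti := strictAntiOn_of_eq_left hδ hΨ.strictMonoOn.monotoneOn hleft
  have hmono := strictMonoOn_of_eq_right hδ hΨ.symm.strictMonoOn.monotoneOn hright
  have hmaps := mapsTo_Icc_of_antitoneOn_of_monotoneOn ⟨hδ.1.le, hδ.2.le⟩ hV0 hV1 hVδ
    hanti.antitoneOn hmono.monotoneOn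
  refine ⟨hδ, hmaps, hV0, hV1, hVδ, ?_, hanti, hmono, square_property_of_duals hVδ
    (fun u hu => (hmaps hu).1) (fun u hu => dual_left_of_eq hδ hΨ hleft hright hu)
    (fun u hu => dual_right_of_eq hδ hΨ hleft hright hu)⟩
  rw [← Icc_union_Icc_eq_Icc hδ.1.le hδ.2.le]
  exact (continuousOn_of_eq_left hδ.1 hΨ.continuousOn hleft).union_of_isClosed
    (continuousOn_of_eq_right hδ.2 hΨ.symm.continuousOn hright) isClosed_Icc isClosed_Icc

end Branches

/-- **Theorem 1 (characterization of v-transforms).**  `V` has the v-transform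
properties with some fulcrum `δ ∈ (0,1)` if and only if there are `δ ∈ (0,1)` and a
continuous, strictly increasing distribution function `Ψ` on `[0,1]`
(with inverse `Ψinv`) such that `V u = (1-u) - (1-δ) * Ψ (u/δ)` for `u ≤ δ` and
`V u = u - δ * Ψinv ((1-u)/(1-δ))` for `u > δ`. -/
theorem stmt_0 (V : ℝ → ℝ) :
    (∃ δ, IsVTransform V δ) ↔
      ∃ δ ∈ Ioo (0:ℝ) 1, ∃ Ψ Ψinv : ℝ → ℝ,
        ContinuousOn Ψ (Icc 0 1) ∧ StrictMonoOn Ψ (Icc 0 1) ∧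
        Ψ 0 = 0 ∧ Ψ 1 = 1 ∧
        (∀ x ∈ Icc (0:ℝ) 1, Ψinv (Ψ x) = x ∧ Ψ (Ψinv x) = x) ∧
        ∀ u ∈ Icc (0:ℝ) 1,
          (u ≤ δ → V u = (1 - u) - (1 - δ) * Ψ (u / δ)) ∧
          (δ < u → V u = u - δ * Ψinv ((1 - u) / (1 - δ))) := by
  constructor
  · rintro ⟨δ, hV⟩
    have hδ₀ : δ ≠ 0 := hV.1.1.ne'
    have hδ₁ : 1 - δ ≠ 0 := (sub_pos.2 hV.1.2).ne'
    have hΨ := hV.isInvertibleCDF_vGenerator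
    exact ⟨δ, hV.1, vGenerator V δ, vGeneratorInv V δ, hΨ.continuousOn, hΨ.strictMonoOn,
      hΨ.map_zero, hΨ.map_one, fun x hx => ⟨hΨ.inv_apply x hx, hΨ.apply_inv x hx⟩,
      fun u _ => ⟨fun _ => apply_eq_one_sub_sub_mul_vGenerator hδ₀ hδ₁ u,
        fun _ => apply_eq_sub_mul_vGeneratorInv hδ₀ hδ₁ u⟩⟩
  · rintro ⟨δ, hδ, Ψ, Ψinv, hcont, hmono, h0, h1, hinv, hV⟩
    exact ⟨δ, IsInvertibleCDF.isVTransform hδ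
      ⟨hcont, hmono, h0, h1, fun x hx => (hinv x hx).1, fun x hx => (hinv x hx).2⟩ hV⟩
end

section
/- Let 𝒱 : [0,1] → [0,1] have the v-transform properties with fulcrum δ ∈ (0,1), let U be uniformly distributed on [0,1] and set V = 𝒱(U). Then for all u, v ∈ [0,1]: P(U ≤ u, V ≤ v) = 0 if u < 𝒱⁻¹(v); P(U ≤ u, V ≤ v) = u − 𝒱⁻¹(v) if 𝒱⁻¹(v) ≤ u < 𝒱⁻¹(v) + v; and P(U ≤ u, V ≤ v) = v if u ≥ 𝒱⁻¹(v) + v. -/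
/-!
STATEMENT 1: the copula of `(U, 𝒱(U))` for a v-transform `𝒱` and uniform `U`.
-/

open Set MeasureTheory

/-- Left-branch inverse `𝒱⁻¹(v) = inf {u ∈ [0,1] : 𝒱 u = v}`. -/
noncomputable def vtInv (V : ℝ → ℝ) (v : ℝ) : ℝ :=
  sInf {u | u ∈ Icc (0:ℝ) 1 ∧ V u = v}

/-- Key structural lemma: for `v ∈ [0,1]`, `vtInv V v` lies in `[0,δ]`,
`vtInv V v + v ≤ 1`, and the sublevel set of `V` within `[0,1]` is exactly
the interval `[vtInv V v, vtInv V v + v]`. -/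
lemma vt_key (V : ℝ → ℝ) (δ : ℝ) (hV : IsVTransform V δ) {v : ℝ}
    (hv : v ∈ Icc (0:ℝ) 1) :
    ∃ a b : ℝ, vtInv V v = a ∧ 0 ≤ a ∧ a ≤ δ ∧ δ ≤ b ∧ b ≤ 1 ∧ b = a + v ∧
      ∀ x ∈ Icc (0:ℝ) 1, (V x ≤ v ↔ a ≤ x ∧ x ≤ b) := by
  obtain ⟨⟨hδ0, hδ1⟩, hmap, hV0, hV1, hVδ, hcont, hanti, hmono, hsq⟩ := hV
  have hδle1 : δ ≤ 1 := hδ1.le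
  have hL : Icc (0:ℝ) δ ⊆ Icc 0 1 := Icc_subset_Icc le_rfl hδle1
  have hR : Icc δ 1 ⊆ Icc (0:ℝ) 1 := Icc_subset_Icc hδ0.le le_rfl
  -- get a on the left branch with V a = v
  obtain ⟨a, haI, hVa⟩ :=
    intermediate_value_Icc' hδ0.le (hcont.mono hL)
      (show v ∈ Icc (V δ) (V 0) by rw [hVδ, hV0]; exact hv)
  -- get b on the right branch with V b = v
  obtain ⟨b, hbI, hVb⟩ :=
    intermediate_value_Icc hδle1 (hcont.mono hR)
      (show v ∈ Icc (V δ) (V 1) by rw [hVδ, hV1]; exact hv)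
  have hab : a ≤ b := le_trans haI.2 hbI.1
  -- vtInv V v = a
  have hlow : ∀ x ∈ {u | u ∈ Icc (0:ℝ) 1 ∧ V u = v}, a ≤ x := by
    rintro x ⟨hx01, hVx⟩
    rcases le_total x δ with hxδ | hδx
    · by_contra hlt
      push_neg at hlt
      have := hanti ⟨hx01.1, hxδ⟩ haI hlt
      rw [hVa, hVx] at this
      exact lt_irrefl v this
    · exact le_trans haI.2 hδx
  have hInv : vtInv V v = a := by
    refine le_antisymm (csInf_le ⟨a, hlow⟩ ⟨hL haI, hVa⟩) ?_
    exact le_csInf ⟨a, hL haI, hVa⟩ hlow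
  -- b = a + v
  have hbav : b = a + v := by
    rcases eq_or_lt_of_le hv.1 with hv0 | hv0
    · -- v = 0 : a = δ = b
      have haδ : a = δ := by
        by_contra hne
        have hlt : a < δ := lt_of_le_of_ne haI.2 hne
        have := hanti haI (right_mem_Icc.mpr hδ0.le) hlt
        rw [hVδ, hVa, ← hv0] at this
        exact lt_irrefl 0 this
      have hbδ : b = δ := by
        by_contra hne
        have hlt : δ < b := lt_of_le_of_ne hbI.1 (Ne.symm hne)
        have := hmono (left_mem_Icc.mpr hδle1) hbI hlt
        rw [hVδ, hVb, ← hv0] at this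
        exact lt_irrefl 0 this
      rw [haδ, hbδ, ← hv0, add_zero]
    · -- v > 0 : use the square property at a
      have haδ : a < δ := by
        rcases lt_or_eq_of_le haI.2 with h | h
        · exact h
        · exfalso; rw [h, hVδ] at hVa; linarith
      obtain ⟨us, husI, hcase, hVus, habs⟩ := hsq a (hL haI) (ne_of_lt haδ)
      have hδus : δ < us := by
        rcases hcase with ⟨_, h⟩ | ⟨_, h⟩
        · exact h
        · exact absurd haδ (not_lt.mpr h.le)
      have husb : us = b := by
        have := hmono.injOn ⟨hδus.le, husI.2⟩ hbI
        apply this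
        rw [hVus, hVa, hVb]
      rw [husb, hVa] at habs
      have : b - a = v := by
        rw [abs_of_nonneg (sub_nonneg.mpr hab)] at habs
        exact habs
      linarith
  refine ⟨a, b, hInv, haI.1, haI.2, hbI.1, hbI.2, hbav, ?_⟩
  -- characterization of the sublevel set
  intro x hx01
  constructor
  · intro hVx
    rcases le_total x δ with hxδ | hδx
    · constructor
      · by_contra hlt
        push_neg at hlt
        have := hanti ⟨hx01.1, hxδ⟩ haI hlt
        rw [hVa] at this
        exact absurd hVx (not_le.mpr this)
      · exact le_trans hxδ hbI.1
    · refine ⟨le_trans haI.2 hδx, ?_⟩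
      by_contra hlt
      push_neg at hlt
      have := hmono hbI ⟨hδx, hx01.2⟩ hlt
      rw [hVb] at this
      exact absurd hVx (not_le.mpr this)
  · rintro ⟨hax, hxb⟩
    rcases le_total x δ with hxδ | hδx
    · have := hanti.antitoneOn haI ⟨hx01.1, hxδ⟩ hax
      rw [hVa] at this
      exact this
    · have := hmono.monotoneOn ⟨hδx, hx01.2⟩ hbI hxb
      rw [hVb] at this
      exact this

/-- **Joint distribution (copula) of `(U, 𝒱(U))`.**  If `U` is uniform on `[0,1]`
and `V = 𝒱(U)`, then `P(U ≤ u, V ≤ v)` equals `0` for `u < 𝒱⁻¹(v)`,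
`u - 𝒱⁻¹(v)` for `𝒱⁻¹(v) ≤ u < 𝒱⁻¹(v) + v`, and `v` for `u ≥ 𝒱⁻¹(v) + v`. -/
theorem stmt_1 {Ω : Type*} [MeasurableSpace Ω] (P : Measure Ω) [IsProbabilityMeasure P]
    (V : ℝ → ℝ) (δ : ℝ) (hV : IsVTransform V δ)
    (U : Ω → ℝ) (hUm : Measurable U)
    (hU : Measure.map U P = volume.restrict (Icc (0:ℝ) 1)) :
    ∀ u ∈ Icc (0:ℝ) 1, ∀ v ∈ Icc (0:ℝ) 1,
      (u < vtInv V v → P {ω | U ω ≤ u ∧ V (U ω) ≤ v} = 0) ∧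
      (vtInv V v ≤ u → u < vtInv V v + v →
        P {ω | U ω ≤ u ∧ V (U ω) ≤ v} = ENNReal.ofReal (u - vtInv V v)) ∧
      (vtInv V v + v ≤ u →
        P {ω | U ω ≤ u ∧ V (U ω) ≤ v} = ENNReal.ofReal v) := by
  intro u hu v hv
  obtain ⟨a, b, hInv, ha0, haδ, hδb, hb1, hba, hchar⟩ := vt_key V δ hV hv
  have hsub : Icc a b ⊆ Icc (0:ℝ) 1 := Icc_subset_Icc ha0 hb1
  -- U lands in [0,1] a.s.
  have hA : P (U ⁻¹' (Icc (0:ℝ) 1))ᶜ = 0 := by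
    have h1 : P (U ⁻¹' (Icc (0:ℝ) 1)) = 1 := by
      rw [← Measure.map_apply hUm measurableSet_Icc, hU,
        Measure.restrict_apply measurableSet_Icc, inter_self, Real.volume_Icc]
      norm_num
    rw [measure_compl (hUm measurableSet_Icc) (measure_ne_top P _), h1, measure_univ,
      tsub_self]
  -- the key computation of the joint probability
  have key : P {ω | U ω ≤ u ∧ V (U ω) ≤ v} = volume (Icc a b ∩ Iic u) := by
    set E := {ω | U ω ≤ u ∧ V (U ω) ≤ v}
    set A := U ⁻¹' (Icc (0:ℝ) 1)
    have hEA : E ∩ A = U ⁻¹' (Icc a b ∩ Iic u) := by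
      ext ω
      simp only [E, A, mem_inter_iff, mem_setOf_eq, mem_preimage, mem_Icc, mem_Iic]
      constructor
      · rintro ⟨⟨h1, h2⟩, h3⟩
        exact ⟨(hchar _ h3).1 h2, h1⟩
      · rintro ⟨hx, h1⟩
        have hx01 : U ω ∈ Icc (0:ℝ) 1 := hsub hx
        exact ⟨⟨h1, (hchar _ hx01).2 hx⟩, hx01⟩
    have hPE : P E = P (E ∩ A) := by
      refine le_antisymm ?_ (measure_mono inter_subset_left)
      calc P E ≤ P ((E ∩ A) ∪ Aᶜ) := by
            apply measure_mono
            intro ω hω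
            by_cases hωA : ω ∈ A
            · exact Or.inl ⟨hω, hωA⟩
            · exact Or.inr hωA
        _ ≤ P (E ∩ A) + P Aᶜ := measure_union_le _ _
        _ = P (E ∩ A) := by rw [hA, add_zero]
    have hTmeas : MeasurableSet (Icc a b ∩ Iic u) :=
      measurableSet_Icc.inter measurableSet_Iic
    rw [hPE, hEA, ← Measure.map_apply hUm hTmeas, hU,
      Measure.restrict_apply hTmeas]
    congr 1
    exact inter_eq_self_of_subset_left fun x hx => hsub hx.1
  have hIcc : Icc a b ∩ Iic u = Icc a (min b u) := by
    ext x
    simp only [mem_inter_iff, mem_Icc, mem_Iic, le_min_iff]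
    tauto
  rw [hInv] at *
  refine ⟨?_, ?_, ?_⟩
  · intro hlt
    rw [key, hIcc, Real.volume_Icc, ENNReal.ofReal_eq_zero]
    have : min b u ≤ u := min_le_right _ _
    linarith
  · intro hle hlt
    rw [key, hIcc, Real.volume_Icc]
    have hmin : min b u = u := min_eq_right (by linarith [hba])
    rw [hmin]
  · intro hge
    rw [key, hIcc, Real.volume_Icc]
    have hmin : min b u = b := min_eq_left (by linarith [hba])
    rw [hmin, hba]
    ring_nf
end

section
/- Let X be a real random variable with absolutely continuous and strictly increasing cdf F_X on ℝ, and let T be a volatility proxy transformation with change point μ_T and profile g_T. Let U = F_X(X) and V = F_{T(X)}(T(X)), where F_{T(X)} is the cdf of T(X). Then V = 𝒱(U) almost surely, where 𝒱(u) = F_X(μ_T + g_T(μ_T − F_X⁻¹(u))) − u for u ≤ F_X(μ_T) and 𝒱(u) = u − F_X(μ_T − g_T⁻¹(F_X⁻¹(u) − μ_T)) for u > F_X(μ_T). -/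
/-!
The transformation `T` decreases on `(-∞, μ_T]` and increases on `[μ_T, ∞)`, and the profile
`g_T` matches the two branches: `T(μ_T - a) = T(μ_T + g_T(a))`. Hence every sublevel set
`{T ≤ T(x)}` is an interval `[μ_T - a, μ_T + g_T(a)]`, whose left or right end is `x` itself, so
`F_{T(X)}(T(x))` is the `F_X`-mass of that interval. Since `F_X` is atomless this mass is the
difference of `F_X` at the endpoints, and `F_X⁻¹(F_X(x)) = x` because `F_X` is injective.
-/

open Set MeasureTheory

theorem StrictMono.mem_Ioo_of_forall_mem_Icc {α β : Type*} [Preorder α] [NoMinOrder α]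
    [NoMaxOrder α] [Preorder β] {F : α → β} {a b : β} (hF : StrictMono F)
    (hab : ∀ x, F x ∈ Icc a b) (x : α) : F x ∈ Ioo a b := by
  obtain ⟨y, hy⟩ := exists_lt x
  obtain ⟨z, hz⟩ := exists_gt x
  exact ⟨(hab y).1.trans_lt (hF hy), (hF hz).trans_le (hab z).2⟩

theorem measureReal_Icc_eq_sub {μ : Measure ℝ} [IsFiniteMeasure μ] {l r : ℝ}
    (hl : μ {l} = 0) (hlr : l ≤ r) : μ.real (Icc l r) = μ.real (Iic r) - μ.real (Iic l) := by
  rw [← measureReal_congr (Ioc_ae_eq_Icc' hl), ← Iic_union_Ioc_eq_Iic hlr,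
    measureReal_union (Iic_disjoint_Ioc le_rfl) measurableSet_Ioc]
  ring

theorem preimage_Iic_eq_Icc {μT : ℝ} {T₁ T₂ T g : ℝ → ℝ}
    (hT₁m : StrictMonoOn T₁ (Ici 0)) (hT₂m : StrictMonoOn T₂ (Ici 0))
    (hT : ∀ x, T x = if x ≤ μT then T₁ (μT - x) else T₂ (x - μT))
    (hg : ∀ x ∈ Ici (0:ℝ), 0 ≤ g x ∧ T₂ (g x) = T₁ x) {a : ℝ} (ha : 0 ≤ a) :
    T ⁻¹' Iic (T₁ a) = Icc (μT - a) (μT + g a) := by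
  obtain ⟨hga, hgT⟩ := hg a ha
  ext y
  simp only [mem_preimage, mem_Iic, mem_Icc, hT y]
  split_ifs with hy
  · rw [hT₁m.le_iff_le (mem_Ici.mpr (by linarith)) (mem_Ici.mpr ha)]
    exact ⟨fun h => ⟨by linarith, by linarith⟩, fun h => by linarith [h.1]⟩
  · rw [← hgT, hT₂m.le_iff_le (mem_Ici.mpr (by linarith)) (mem_Ici.mpr hga)]
    exact ⟨fun h => ⟨by linarith, by linarith⟩, fun h => by linarith [h.2]⟩

theorem stmt_6_general {Ω : Type*} [MeasurableSpace Ω] (P : Measure Ω) [IsProbabilityMeasure P]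
    (X : Ω → ℝ) (hX : Measurable X)
    -- `F` is the cdf of `X`; it is absolutely continuous and strictly increasing
    (F : ℝ → ℝ) (hF : ∀ x, F x = (P {ω | X ω ≤ x}).toReal)
    (habs : Measure.map X P ≪ volume) (hFm : StrictMono F)
    -- `Finv` inverts `F` on `(0,1)`
    (Finv : ℝ → ℝ) (hFinv : ∀ u ∈ Ioo (0:ℝ) 1, F (Finv u) = u)
    -- volatility proxy transformation `T` with change point `μT`
    (μT : ℝ) (T₁ T₂ : ℝ → ℝ)
    (hT₁m : StrictMonoOn T₁ (Ici 0)) (hT₂m : StrictMonoOn T₂ (Ici 0))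
    (T : ℝ → ℝ) (hT : ∀ x, T x = if x ≤ μT then T₁ (μT - x) else T₂ (x - μT))
    -- profile function `g = T₂⁻¹ ∘ T₁` on `[0,∞)`, with inverse `ginv = T₁⁻¹ ∘ T₂`
    (g : ℝ → ℝ) (hg : ∀ x ∈ Ici (0:ℝ), 0 ≤ g x ∧ T₂ (g x) = T₁ x)
    (ginv : ℝ → ℝ)
    (hginv' : ∀ y ∈ Ici (0:ℝ), 0 ≤ ginv y ∧ g (ginv y) = y)
    -- `G` is the cdf of `T(X)`
    (G : ℝ → ℝ) (hG : ∀ t, G t = (P {ω | T (X ω) ≤ t}).toReal) :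
    -- `V = 𝒱(U)` almost surely
    ∀ᵐ ω ∂P, G (T (X ω)) =
      if F (X ω) ≤ F μT then F (μT + g (μT - Finv (F (X ω)))) - F (X ω)
      else F (X ω) - F (μT - ginv (Finv (F (X ω)) - μT)) := by
  have hF_eq : ∀ x, F x = (P.map X).real (Iic x) := fun x => by
    rw [hF, map_measureReal_apply hX measurableSet_Iic]; rfl
  have hG_Icc : ∀ t l r, T ⁻¹' Iic t = Icc l r → l ≤ r → G t = F r - F l := by
    intro t l r hTt hlr
    rw [hG, hF_eq, hF_eq, ← measureReal_Icc_eq_sub (habs (measure_singleton l)) hlr,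
      map_measureReal_apply hX measurableSet_Icc, ← hTt]
    rfl
  have hFinvF : ∀ x, Finv (F x) = x := fun x => hFm.injective <| hFinv _ <|
    hFm.mem_Ioo_of_forall_mem_Icc (fun y => by
      rw [hF_eq]; exact ⟨measureReal_nonneg, measureReal_le_one⟩) x
  refine ae_of_all P fun ω => ?_
  simp only [hFinvF, hFm.le_iff_le, hT]
  split_ifs with hx
  · have ha : 0 ≤ μT - X ω := sub_nonneg.mpr hx
    rw [hG_Icc _ _ _ (preimage_Iic_eq_Icc hT₁m hT₂m hT hg ha)
      (by linarith [(hg _ ha).1]), sub_sub_cancel]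
  · have hb : 0 ≤ X ω - μT := by linarith
    obtain ⟨hgb, hggb⟩ := hginv' _ hb
    have hTb : T₂ (X ω - μT) = T₁ (ginv (X ω - μT)) := by rw [← (hg _ hgb).2, hggb]
    rw [hTb, hG_Icc _ _ _ (preimage_Iic_eq_Icc hT₁m hT₂m hT hg hgb) (by linarith), hggb,
      add_sub_cancel]

theorem stmt_6 {Ω : Type*} [MeasurableSpace Ω] (P : Measure Ω) [IsProbabilityMeasure P]
    (X : Ω → ℝ) (hX : Measurable X)
    -- `F` is the cdf of `X`; it is absolutely continuous and strictly increasing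
    (F : ℝ → ℝ) (hF : ∀ x, F x = (P {ω | X ω ≤ x}).toReal)
    (habs : Measure.map X P ≪ volume) (hFm : StrictMono F)
    -- `Finv` inverts `F` on `(0,1)`
    (Finv : ℝ → ℝ) (hFinv : ∀ u ∈ Ioo (0:ℝ) 1, F (Finv u) = u)
    -- volatility proxy transformation `T` with change point `μT`
    (μT : ℝ) (T₁ T₂ : ℝ → ℝ)
    (hT₁m : StrictMonoOn T₁ (Ici 0)) (hT₂m : StrictMonoOn T₂ (Ici 0))
    (hT₁c : ContinuousOn T₁ (Ici 0)) (hT₂c : ContinuousOn T₂ (Ici 0))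
    (hT₁d : DifferentiableOn ℝ T₁ (Ici 0)) (hT₂d : DifferentiableOn ℝ T₂ (Ici 0))
    (h00 : T₁ 0 = T₂ 0)
    (T : ℝ → ℝ) (hT : ∀ x, T x = if x ≤ μT then T₁ (μT - x) else T₂ (x - μT))
    -- profile function `g = T₂⁻¹ ∘ T₁` on `[0,∞)`, with inverse `ginv = T₁⁻¹ ∘ T₂`
    (g : ℝ → ℝ) (hg : ∀ x ∈ Ici (0:ℝ), 0 ≤ g x ∧ T₂ (g x) = T₁ x)
    (ginv : ℝ → ℝ) (hginv : ∀ x ∈ Ici (0:ℝ), ginv (g x) = x)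
    (hginv' : ∀ y ∈ Ici (0:ℝ), 0 ≤ ginv y ∧ g (ginv y) = y)
    -- `G` is the cdf of `T(X)`
    (G : ℝ → ℝ) (hG : ∀ t, G t = (P {ω | T (X ω) ≤ t}).toReal) :
    -- `V = 𝒱(U)` almost surely
    ∀ᵐ ω ∂P, G (T (X ω)) =
      if F (X ω) ≤ F μT then F (μT + g (μT - Finv (F (X ω)))) - F (X ω)
      else F (X ω) - F (μT - ginv (Finv (F (X ω)) - μT)) :=
  stmt_6_general P X hX F hF habs hFm Finv hFinv μT T₁ T₂ hT₁m hT₂m T hT g hg ginv hginv' G hG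
end

section
/- Fix γ > 0, k > 0, ξ > 0 and set δ = (1+γ²)⁻¹ and κ = k/γ^{ξ+1}. Let F_X(·;γ) be the cdf given by F_X(x;γ) = δ·e^{γx} for x ≤ 0 and F_X(x;γ) = 1 − (1−δ)·e^{−x/γ} for x > 0 (the Fernández–Steel skewed Laplace cdf). Then the v-transform obtained from the construction 𝒱(u) = F_X(g_T(−F_X⁻¹(u))) − u for u ≤ δ, 𝒱(u) = u − F_X(−g_T⁻¹(F_X⁻¹(u))) for u > δ, with change point μ_T = 0 and profile g_T(x) = k·x^ξ, equals 𝒱_{δ,κ,ξ}(u) = 1 − u − (1−δ)·exp(−κ·(−ln(u/δ))^ξ) for u ≤ δ and 𝒱_{δ,κ,ξ}(u) = u − δ·exp(−κ^{−1/ξ}·(−ln((1−u)/(1−δ)))^{1/ξ}) for u > δ. -/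
/-!
STATEMENT 7: the v-transform induced by the Fernández–Steel skewed Laplace
distribution with parameter `γ` and the profile `g(x) = k·x^ξ` (change point
`μ_T = 0`) is the parametric v-transform `𝒱_{δ,κ,ξ}` with `δ = (1+γ²)⁻¹` and
`κ = k/γ^{ξ+1}`.
-/

open Set

theorem stmt_7 (γ k ξ : ℝ) (hγ : 0 < γ) (hk : 0 < k) (hξ : 0 < ξ)
    (δ κ : ℝ) (hδ : δ = (1 + γ ^ 2)⁻¹) (hκ : κ = k / γ ^ (ξ + 1))
    -- the skewed Laplace cdf `F_X(·;γ)`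
    (F : ℝ → ℝ)
    (hF : ∀ x, F x = if x ≤ 0 then δ * Real.exp (γ * x)
                     else 1 - (1 - δ) * Real.exp (-x / γ))
    -- its inverse on `(0,1)`
    (Finv : ℝ → ℝ) (hFinv : ∀ u ∈ Ioo (0:ℝ) 1, F (Finv u) = u)
    -- the profile `g_T(x) = k·x^ξ` and its inverse on `[0,∞)`
    (g : ℝ → ℝ) (hg : ∀ x, g x = k * x ^ ξ)
    (ginv : ℝ → ℝ) (hginv : ∀ y ∈ Ici (0:ℝ), 0 ≤ ginv y ∧ g (ginv y) = y) :
    -- the v-transform `𝒱(u) = F(μ_T + g(μ_T - F⁻¹(u))) - u` for `u ≤ δ`,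
    -- `𝒱(u) = u - F(μ_T - g⁻¹(F⁻¹(u) - μ_T))` for `u > δ`, with `μ_T = 0`,
    -- equals `𝒱_{δ,κ,ξ}`
    ∀ u ∈ Ioo (0:ℝ) 1,
      (u ≤ δ → F (g (-Finv u)) - u
        = 1 - u - (1 - δ) * Real.exp (-κ * (-Real.log (u / δ)) ^ ξ)) ∧
      (δ < u → u - F (-ginv (Finv u))
        = u - δ * Real.exp (-(κ ^ (-1 / ξ)) * (-Real.log ((1 - u) / (1 - δ))) ^ (1 / ξ))) := by
  have hδ0 : 0 < δ := by rw [hδ]; positivity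
  have hδ1 : δ < 1 := by
    rw [hδ]
    have h1 : (1:ℝ) < 1 + γ ^ 2 := by nlinarith
    rw [inv_lt_one_iff₀]
    right; exact h1
  have hγξ : 0 < γ ^ ξ := Real.rpow_pos_of_pos hγ ξ
  have hγe : γ ^ (ξ+1) = γ ^ ξ * γ := by
    rw [Real.rpow_add hγ, Real.rpow_one]
  have hκ0 : 0 < κ := by rw [hκ]; positivity
  have hFpos : ∀ x : ℝ, 0 ≤ x → F x = 1 - (1 - δ) * Real.exp (-x / γ) := by
    intro x hx
    rcases hx.eq_or_lt with h | h
    · rw [hF, if_pos h.ge, ← h]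
      simp [Real.exp_zero]
    · rw [hF, if_neg (not_le.mpr h)]
  intro u hu
  obtain ⟨hu0, hu1⟩ := hu
  have hFu := hFinv u ⟨hu0, hu1⟩
  constructor
  · -- u ≤ δ
    intro hle
    have hx0 : Finv u ≤ 0 := by
      by_contra h
      push_neg at h
      have h2 := hFu
      rw [hF, if_neg (not_le.mpr h)] at h2
      have he : Real.exp (-Finv u / γ) < 1 := by
        rw [Real.exp_lt_one_iff]
        exact div_neg_of_neg_of_pos (by linarith) hγ
      nlinarith [mul_lt_mul_of_pos_left he (show (0:ℝ) < 1 - δ by linarith)]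
    have hexp : Real.exp (γ * Finv u) = u / δ := by
      have h2 := hFu
      rw [hF, if_pos hx0] at h2
      rw [eq_div_iff hδ0.ne']
      linear_combination h2
    have hlog : γ * Finv u = Real.log (u / δ) := by
      rw [← Real.log_exp (γ * Finv u), hexp]
    set L := -Real.log (u / δ) with hL
    have hL0 : 0 ≤ L := by
      have hud : u / δ ≤ 1 := (div_le_one hδ0).mpr hle
      have := Real.log_nonpos (by positivity) hud
      simp only [hL]; linarith
    have hFi : -Finv u = L / γ := by
      rw [eq_div_iff hγ.ne']
      linear_combination -hlog - hL
    have hgval : g (-Finv u) = k * L ^ ξ / γ ^ ξ := by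
      rw [hg, hFi, Real.div_rpow hL0 hγ.le]
      ring
    have hgnn : 0 ≤ g (-Finv u) := by rw [hgval]; positivity
    rw [hFpos _ hgnn, hgval]
    have hee : -(k * L ^ ξ / γ ^ ξ) / γ = -κ * L ^ ξ := by
      rw [hκ, hγe]
      field_simp
    rw [hee]
    ring
  · -- δ < u
    intro hlt
    have hx0 : 0 < Finv u := by
      by_contra h
      push_neg at h
      have h2 := hFu
      rw [hF, if_pos h] at h2
      have he : Real.exp (γ * Finv u) ≤ 1 := by
        rw [Real.exp_le_one_iff]
        exact mul_nonpos_of_nonneg_of_nonpos hγ.le h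
      nlinarith [mul_le_mul_of_nonneg_left he hδ0.le]
    have h1δ : 0 < 1 - δ := by linarith
    have hexp : Real.exp (-Finv u / γ) = (1 - u) / (1 - δ) := by
      have h2 := hFu
      rw [hF, if_neg (not_le.mpr hx0)] at h2
      rw [eq_div_iff h1δ.ne']
      linear_combination -h2
    set L := -Real.log ((1 - u) / (1 - δ)) with hL
    have hlog : -Finv u / γ = -L := by
      rw [← Real.log_exp (-Finv u / γ), hexp, hL, neg_neg]
    have hFiv : Finv u = γ * L := by
      rw [div_eq_iff hγ.ne'] at hlog
      linear_combination -hlog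
    have hL0 : 0 ≤ L := by
      by_contra h
      push_neg at h
      nlinarith
    obtain ⟨hg0, hge⟩ := hginv (Finv u) (mem_Ici.mpr hx0.le)
    rw [hg] at hge
    have hgv : ginv (Finv u) = (γ * L / k) ^ (1/ξ) := by
      have h1 : (ginv (Finv u)) ^ ξ = γ * L / k := by
        rw [eq_div_iff hk.ne']
        linear_combination hge + hFiv
      rw [← h1, one_div, Real.rpow_rpow_inv hg0 hξ.ne']
    have hne : -ginv (Finv u) ≤ 0 := neg_nonpos.mpr hg0
    rw [hF, if_pos hne, hgv]
    have hbase : κ ^ (-1/ξ) = (γ ^ (ξ+1) / k) ^ (1/ξ) := by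
      have hinv : κ⁻¹ = γ ^ (ξ+1) / k := by rw [hκ]; field_simp
      rw [neg_div, Real.rpow_neg hκ0.le, ← Real.inv_rpow hκ0.le, hinv]
    have hexpeq : γ * -(γ * L / k) ^ (1/ξ) = -(κ ^ (-1/ξ)) * L ^ (1/ξ) := by
      rw [hbase]
      have hγr : γ = (γ ^ ξ) ^ (1/ξ) := by
        rw [one_div, Real.rpow_rpow_inv hγ.le hξ.ne']
      have hb : γ ^ ξ * (γ * L / k) = (γ ^ (ξ+1) / k) * L := by
        rw [hγe]; field_simp
      calc γ * -(γ * L / k) ^ (1/ξ)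
          = -((γ ^ ξ) ^ (1/ξ) * (γ * L / k) ^ (1/ξ)) := by rw [← hγr]; ring
        _ = -((γ ^ ξ * (γ * L / k)) ^ (1/ξ)) := by
            rw [← Real.mul_rpow hγξ.le (by positivity)]
        _ = -((γ ^ (ξ+1) / k * L) ^ (1/ξ)) := by rw [hb]
        _ = -((γ ^ (ξ+1) / k) ^ (1/ξ) * L ^ (1/ξ)) := by
            rw [Real.mul_rpow (by positivity) hL0]
        _ = -(γ ^ (ξ+1) / k) ^ (1/ξ) * L ^ (1/ξ) := by ring
    rw [hexpeq]
end

section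
/- Let δ ∈ (0,1) and let 𝒱_δ be the linear v-transform with fulcrum δ. Let (V₁,V₂) be a random vector in [0,1]² whose one-dimensional margins are uniform, let W₁, W₂ be i.i.d. uniform random variables on [0,1] independent of (V₁,V₂), and set U_i = δ(1−V_i) if W_i ≤ δ and U_i = δ + (1−δ)V_i if W_i > δ, for i = 1,2 (the stochastic inversion of 𝒱_δ). Then 12·E[U₁U₂] − 3 = (2δ−1)²·(12·E[V₁V₂] − 3); i.e., the Pearson correlation of (U₁,U₂) equals (2δ−1)² times the Pearson correlation of (V₁,V₂). -/
/-!
Averaging over the auxiliary uniform variable first, the stochastic inversion of the linear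
v-transform has conditional mean `𝔼[U | V = v] = δ·δ(1-v) + (1-δ)(δ + (1-δ)v) = δ + (1-2δ)v`,
an affine function of `v` with slope `1 - 2δ`. Since `W₁, W₂` are independent of each other and
of `(V₁,V₂)`, Fubini gives `𝔼[U₁U₂] = 𝔼[(δ + (1-2δ)V₁)(δ + (1-2δ)V₂)]`, and expanding with
`𝔼[Vᵢ] = 1/2` yields `12·𝔼[U₁U₂] - 3 = (1-2δ)²(12·𝔼[V₁V₂] - 3)`.
-/

open Set MeasureTheory

noncomputable def linearVTransformInv (δ v w : ℝ) : ℝ :=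
  if w ≤ δ then δ * (1 - v) else δ + (1 - δ) * v

lemma measurable_linearVTransformInv (δ : ℝ) :
    Measurable (Function.uncurry (linearVTransformInv δ)) :=
  Measurable.ite (measurableSet_le measurable_snd measurable_const) (by fun_prop) (by fun_prop)

lemma linearVTransformInv_mem_Icc {δ v : ℝ} (hδ : δ ∈ Icc (0 : ℝ) 1) (hv : v ∈ Icc (0 : ℝ) 1)
    (w : ℝ) : linearVTransformInv δ v w ∈ Icc (0 : ℝ) 1 := by
  obtain ⟨hδ0, hδ1⟩ := hδ
  obtain ⟨hv0, hv1⟩ := hv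
  unfold linearVTransformInv
  split_ifs <;> constructor <;> nlinarith

lemma integral_ite_le_uniform {c : ℝ} (hc : c ∈ Icc (0 : ℝ) 1) (a b : ℝ) :
    ∫ w, (if w ≤ c then a else b) ∂(volume.restrict (Icc (0 : ℝ) 1)) = c * a + (1 - c) * b := by
  have hIic : (volume.restrict (Icc (0 : ℝ) 1)).real (Iic c) = c := by
    rw [measureReal_restrict_apply measurableSet_Iic, inter_comm, ← Ici_inter_Iic, inter_assoc,
      Iic_inter_Iic, min_eq_right hc.2, Ici_inter_Iic, Real.volume_real_Icc_of_le hc.1, sub_zero]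
  have hsplit : (fun w : ℝ => if w ≤ c then a else b) =
      fun w => (Iic c).indicator (fun _ => a - b) w + b := by
    funext w
    by_cases h : w ≤ c <;> simp [indicator, h]
  have : IsProbabilityMeasure (volume.restrict (Icc (0 : ℝ) 1)) := ⟨by simp⟩
  rw [hsplit, integral_add ((integrable_const _).indicator measurableSet_Iic) (integrable_const _),
    integral_indicator_const _ measurableSet_Iic, integral_const, hIic]
  simp only [probReal_univ, smul_eq_mul]
  ring

lemma integral_linearVTransformInv {δ : ℝ} (hδ : δ ∈ Icc (0 : ℝ) 1) (v : ℝ) :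
    ∫ w, linearVTransformInv δ v w ∂(volume.restrict (Icc (0 : ℝ) 1)) = δ + (1 - 2 * δ) * v := by
  simp only [linearVTransformInv, integral_ite_le_uniform hδ]
  ring

theorem integral_mul_of_map_eq_prod {Ω α β : Type*} [MeasurableSpace Ω] [MeasurableSpace α]
    [MeasurableSpace β] {P : Measure Ω} [SFinite P] {ν₁ ν₂ : Measure β} [SFinite ν₁] [SFinite ν₂]
    {X₁ X₂ : Ω → α} {Y₁ Y₂ : Ω → β} (hX₁ : Measurable X₁) (hX₂ : Measurable X₂)
    (hY₁ : Measurable Y₁) (hY₂ : Measurable Y₂)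
    (hmap : P.map (fun ω => ((X₁ ω, X₂ ω), (Y₁ ω, Y₂ ω)))
      = (P.map fun ω => (X₁ ω, X₂ ω)).prod (ν₁.prod ν₂))
    {f g : α → β → ℝ} (hf : Measurable (Function.uncurry f))
    (hg : Measurable (Function.uncurry g))
    (hint : Integrable (fun ω => f (X₁ ω) (Y₁ ω) * g (X₂ ω) (Y₂ ω)) P) :
    ∫ ω, f (X₁ ω) (Y₁ ω) * g (X₂ ω) (Y₂ ω) ∂P
      = ∫ ω, (∫ y, f (X₁ ω) y ∂ν₁) * (∫ y, g (X₂ ω) y ∂ν₂) ∂P := by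
  set G : (α × α) × (β × β) → ℝ := fun x => f x.1.1 x.2.1 * g x.1.2 x.2.2
  have hjoint : Measurable fun ω => ((X₁ ω, X₂ ω), (Y₁ ω, Y₂ ω)) := by fun_prop
  have hG : Measurable G :=
    (hf.comp (measurable_fst.fst.prodMk measurable_snd.fst)).mul
      (hg.comp (measurable_fst.snd.prodMk measurable_snd.snd))
  have hGint : Integrable G ((P.map fun ω => (X₁ ω, X₂ ω)).prod (ν₁.prod ν₂)) := by
    rw [← hmap]
    exact (integrable_map_measure hG.aestronglyMeasurable hjoint.aemeasurable).mpr hint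
  have hmean : StronglyMeasurable fun p : α × α => (∫ y, f p.1 y ∂ν₁) * ∫ y, g p.2 y ∂ν₂ :=
    (hf.stronglyMeasurable.integral_prod_right.comp_measurable measurable_fst).mul
      (hg.stronglyMeasurable.integral_prod_right.comp_measurable measurable_snd)
  calc ∫ ω, G ((X₁ ω, X₂ ω), (Y₁ ω, Y₂ ω)) ∂P
      = ∫ x, G x ∂(P.map fun ω => ((X₁ ω, X₂ ω), (Y₁ ω, Y₂ ω))) :=
        (integral_map hjoint.aemeasurable hG.aestronglyMeasurable).symm
    _ = ∫ p, (∫ y, f p.1 y ∂ν₁) * (∫ y, g p.2 y ∂ν₂) ∂(P.map fun ω => (X₁ ω, X₂ ω)) := by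
        rw [hmap, integral_prod G hGint]
        congr with p
        exact integral_prod_mul (f p.1) (g p.2)
    _ = _ := integral_map (by fun_prop) hmean.aestronglyMeasurable

section UniformMargin

variable {Ω : Type*} [MeasurableSpace Ω] {P : Measure Ω} {X : Ω → ℝ}

lemma ae_mem_Icc_of_map_eq_uniform (hX : AEMeasurable X P)
    (h : P.map X = volume.restrict (Icc (0 : ℝ) 1)) : ∀ᵐ ω ∂P, X ω ∈ Icc (0 : ℝ) 1 := by
  have hmem : ∀ᵐ x ∂(P.map X), x ∈ Icc (0 : ℝ) 1 := h ▸ ae_restrict_mem measurableSet_Icc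
  exact (ae_map_iff hX measurableSet_Icc).mp hmem

lemma integral_of_map_eq_uniform (hX : AEMeasurable X P)
    (h : P.map X = volume.restrict (Icc (0 : ℝ) 1)) : ∫ ω, X ω ∂P = 1 / 2 := by
  calc ∫ ω, X ω ∂P = ∫ x, x ∂(P.map X) := (integral_map hX aestronglyMeasurable_id).symm
    _ = 1 / 2 := by
      rw [h, integral_Icc_eq_integral_Ioc, ← intervalIntegral.integral_of_le zero_le_one,
        integral_id]
      norm_num

lemma integrable_mul_of_ae_mem_Icc [IsFiniteMeasure P] {Y : Ω → ℝ} (hX : AEMeasurable X P)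
    (hY : AEMeasurable Y P) (hX01 : ∀ᵐ ω ∂P, X ω ∈ Icc (0 : ℝ) 1)
    (hY01 : ∀ᵐ ω ∂P, Y ω ∈ Icc (0 : ℝ) 1) : Integrable (fun ω => X ω * Y ω) P :=
  Integrable.of_mem_Icc 0 1 (hX.mul hY) <| by
    filter_upwards [hX01, hY01] with ω h₁ h₂ using unitInterval.mul_mem h₁ h₂

end UniformMargin

lemma integral_affine_mul_affine {Ω : Type*} [MeasurableSpace Ω] {P : Measure Ω}
    [IsProbabilityMeasure P] {X Y : Ω → ℝ} (hX : Integrable X P) (hY : Integrable Y P)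
    (hXY : Integrable (fun ω => X ω * Y ω) P) (a b : ℝ) :
    ∫ ω, (a + b * X ω) * (a + b * Y ω) ∂P
      = a ^ 2 + a * b * (∫ ω, X ω ∂P + ∫ ω, Y ω ∂P) + b ^ 2 * ∫ ω, X ω * Y ω ∂P := by
  have hexpand : (fun ω => (a + b * X ω) * (a + b * Y ω))
      = fun ω => a ^ 2 + a * b * (X ω + Y ω) + b ^ 2 * (X ω * Y ω) := by
    funext ω; ring
  have hlin : Integrable (fun ω => a * b * (X ω + Y ω)) P := (hX.add hY).const_mul _
  have haff : Integrable (fun ω => a ^ 2 + a * b * (X ω + Y ω)) P := (integrable_const _).add hlin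
  rw [hexpand, integral_add haff (hXY.const_mul _),
    integral_add (integrable_const _) hlin, integral_const_mul, integral_const_mul,
    integral_add hX hY, integral_const]
  simp

theorem stmt_10 {Ω : Type*} [MeasurableSpace Ω] (P : Measure Ω) [IsProbabilityMeasure P]
    (δ : ℝ) (hδ : δ ∈ Ioo (0:ℝ) 1)
    (V₁ V₂ W₁ W₂ : Ω → ℝ)
    (hV₁m : Measurable V₁) (hV₂m : Measurable V₂)
    (hW₁m : Measurable W₁) (hW₂m : Measurable W₂)
    -- `(V₁,V₂)` has uniform one-dimensional margins
    (hV₁ : Measure.map V₁ P = volume.restrict (Icc (0:ℝ) 1))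
    (hV₂ : Measure.map V₂ P = volume.restrict (Icc (0:ℝ) 1))
    -- `W₁, W₂` are i.i.d. uniform on `[0,1]`, independent of `(V₁,V₂)`
    (hW : Measure.map (fun ω => ((V₁ ω, V₂ ω), (W₁ ω, W₂ ω))) P
      = (Measure.map (fun ω => (V₁ ω, V₂ ω)) P).prod
          ((volume.restrict (Icc (0:ℝ) 1)).prod (volume.restrict (Icc (0:ℝ) 1))))
    -- stochastic inversion of the linear v-transform `𝒱_δ`
    (U₁ U₂ : Ω → ℝ)
    (hU₁ : ∀ ω, U₁ ω = if W₁ ω ≤ δ then δ * (1 - V₁ ω) else δ + (1 - δ) * V₁ ω)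
    (hU₂ : ∀ ω, U₂ ω = if W₂ ω ≤ δ then δ * (1 - V₂ ω) else δ + (1 - δ) * V₂ ω) :
    12 * (∫ ω, U₁ ω * U₂ ω ∂P) - 3
      = (2 * δ - 1) ^ 2 * (12 * (∫ ω, V₁ ω * V₂ ω ∂P) - 3) := by
  have hδIcc : δ ∈ Icc (0 : ℝ) 1 := Ioo_subset_Icc_self hδ
  have hV₁01 := ae_mem_Icc_of_map_eq_uniform hV₁m.aemeasurable hV₁
  have hV₂01 := ae_mem_Icc_of_map_eq_uniform hV₂m.aemeasurable hV₂
  have hU : ∀ ω, U₁ ω * U₂ ω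
      = linearVTransformInv δ (V₁ ω) (W₁ ω) * linearVTransformInv δ (V₂ ω) (W₂ ω) := fun ω => by
    rw [hU₁, hU₂, linearVTransformInv, linearVTransformInv]
  have hUint := integrable_mul_of_ae_mem_Icc
    ((measurable_linearVTransformInv δ).comp (hV₁m.prodMk hW₁m)).aemeasurable
    ((measurable_linearVTransformInv δ).comp (hV₂m.prodMk hW₂m)).aemeasurable
    (hV₁01.mono fun _ h => linearVTransformInv_mem_Icc hδIcc h _)
    (hV₂01.mono fun _ h => linearVTransformInv_mem_Icc hδIcc h _)
  simp only [hU]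
  rw [integral_mul_of_map_eq_prod hV₁m hV₂m hW₁m hW₂m hW (measurable_linearVTransformInv δ)
    (measurable_linearVTransformInv δ) hUint]
  simp only [integral_linearVTransformInv hδIcc]
  rw [integral_affine_mul_affine (Integrable.of_mem_Icc 0 1 hV₁m.aemeasurable hV₁01)
      (Integrable.of_mem_Icc 0 1 hV₂m.aemeasurable hV₂01)
      (integrable_mul_of_ae_mem_Icc hV₁m.aemeasurable hV₂m.aemeasurable hV₁01 hV₂01),
    integral_of_map_eq_uniform hV₁m.aemeasurable hV₁,
    integral_of_map_eq_uniform hV₂m.aemeasurable hV₂]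
  ring
end

section
/- Let V and W be independent random variables, each uniformly distributed on [0,1], and define U = (1−V)/2 if W ≤ 1/2 and U = (1+V)/2 if W > 1/2. Then U is uniformly distributed on [0,1] and |2U − 1| = V almost surely. -/
/-!
STATEMENT 11: stochastic inversion of the symmetric v-transform `𝒱(u) = |2u-1|`:
if `V, W` are independent uniform variables on `[0,1]` and `U = (1-V)/2` when
`W ≤ 1/2`, `U = (1+V)/2` when `W > 1/2`, then `U` is uniform on `[0,1]` and
`|2U - 1| = V` almost surely.
-/

open Set MeasureTheory

lemma map_affine_volume (a b : ℝ) (ha : a ≠ 0) :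
    Measure.map (fun x => a * x + b) volume = ENNReal.ofReal |a⁻¹| • volume := by
  have h1 : (fun x : ℝ => a * x + b) = (fun y => b + y) ∘ (fun x => a * x) := by
    funext x; simp [add_comm]
  rw [h1, ← Measure.map_map (measurable_const_add b) (measurable_const_mul a),
    Real.map_volume_mul_left ha, Measure.map_smul,
    (measurePreserving_add_left volume b).map_eq]

theorem stmt_11 {Ω : Type*} [MeasurableSpace Ω] (P : Measure Ω) [IsProbabilityMeasure P]
    (V W : Ω → ℝ) (hVm : Measurable V) (hWm : Measurable W)
    (hVu : Measure.map V P = volume.restrict (Icc (0:ℝ) 1))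
    (hWu : Measure.map W P = volume.restrict (Icc (0:ℝ) 1))
    (hind : ProbabilityTheory.IndepFun V W P)
    (U : Ω → ℝ)
    (hU : ∀ ω, U ω = if W ω ≤ 1/2 then (1 - V ω) / 2 else (1 + V ω) / 2) :
    Measure.map U P = volume.restrict (Icc (0:ℝ) 1) ∧
    ∀ᵐ ω ∂P, |2 * U ω - 1| = V ω := by
  set f : ℝ → ℝ := fun x => (-(1/2)) * x + 1/2 with hf
  set g : ℝ → ℝ := fun x => (1/2) * x + 1/2 with hg
  have hfm : Measurable f := (measurable_const_mul _).add_const _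
  have hgm : Measurable g := (measurable_const_mul _).add_const _
  have hfv : ∀ x, f x = (1 - x) / 2 := fun x => by simp only [hf]; ring
  have hgv : ∀ x, g x = (1 + x) / 2 := fun x => by simp only [hg]; ring
  have hUm : Measurable U := by
    have : U = fun ω => if W ω ≤ 1/2 then (1 - V ω) / 2 else (1 + V ω) / 2 := funext hU
    rw [this]
    exact Measurable.ite (measurableSet_le hWm measurable_const)
      ((measurable_const.sub hVm).div_const 2) ((measurable_const.add hVm).div_const 2)
  -- V ∈ [0,1] a.s.
  have hV01 : ∀ᵐ ω ∂P, V ω ∈ Icc (0:ℝ) 1 := by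
    have h1 : P (V ⁻¹' Icc 0 1) = 1 := by
      rw [← Measure.map_apply hVm measurableSet_Icc, hVu,
        Measure.restrict_apply measurableSet_Icc, inter_self, Real.volume_Icc]
      norm_num
    have h2 : P (V ⁻¹' Icc 0 1)ᶜ = 0 := by
      rw [measure_compl (hVm measurableSet_Icc) (measure_ne_top _ _), h1, measure_univ]
      simp
    filter_upwards [measure_eq_zero_iff_ae_notMem.mp h2] with ω hω
    simpa using hω
  constructor
  · -- map of the affine pieces
    have hmapf : Measure.map f (volume.restrict (Icc (0:ℝ) 1))
        = ENNReal.ofReal 2 • volume.restrict (Icc (0:ℝ) (1/2)) := by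
      have hpre : f ⁻¹' Icc (0:ℝ) (1/2) = Icc (0:ℝ) 1 := by
        ext x
        simp only [mem_preimage, mem_Icc, hfv]
        constructor <;> rintro ⟨h1, h2⟩ <;> exact ⟨by linarith, by linarith⟩
      rw [← hpre, ← Measure.restrict_map hfm measurableSet_Icc,
        map_affine_volume _ _ (by norm_num : (-(1/2) : ℝ) ≠ 0), Measure.restrict_smul]
      norm_num
    have hmapg : Measure.map g (volume.restrict (Icc (0:ℝ) 1))
        = ENNReal.ofReal 2 • volume.restrict (Icc (1/2 : ℝ) 1) := by
      have hpre : g ⁻¹' Icc (1/2 : ℝ) 1 = Icc (0:ℝ) 1 := by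
        ext x
        simp only [mem_preimage, mem_Icc, hgv]
        constructor <;> rintro ⟨h1, h2⟩ <;> exact ⟨by linarith, by linarith⟩
      rw [← hpre, ← Measure.restrict_map hgm measurableSet_Icc,
        map_affine_volume _ _ (by norm_num : (1/2 : ℝ) ≠ 0), Measure.restrict_smul]
      norm_num
    have hW1 : P (W ⁻¹' Iic (1/2 : ℝ)) = ENNReal.ofReal (1/2) := by
      rw [← Measure.map_apply hWm measurableSet_Iic, hWu,
        Measure.restrict_apply measurableSet_Iic]
      have : Iic (1/2 : ℝ) ∩ Icc 0 1 = Icc (0:ℝ) (1/2) := by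
        ext x
        simp only [mem_inter_iff, mem_Iic, mem_Icc]
        constructor
        · rintro ⟨h1, h2, h3⟩; exact ⟨h2, h1⟩
        · rintro ⟨h1, h2⟩; exact ⟨h2, h1, by linarith⟩
      rw [this, Real.volume_Icc]; norm_num
    have hW2 : P (W ⁻¹' Ioi (1/2 : ℝ)) = ENNReal.ofReal (1/2) := by
      rw [← Measure.map_apply hWm measurableSet_Ioi, hWu,
        Measure.restrict_apply measurableSet_Ioi]
      have : Ioi (1/2 : ℝ) ∩ Icc 0 1 = Ioc (1/2 : ℝ) 1 := by
        ext x
        simp only [mem_inter_iff, mem_Ioi, mem_Icc, mem_Ioc]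
        constructor
        · rintro ⟨h1, h2, h3⟩; exact ⟨h1, h3⟩
        · rintro ⟨h1, h2⟩; exact ⟨h1, by linarith, h2⟩
      rw [this, Real.volume_Ioc]; norm_num
    ext s hs
    rw [Measure.map_apply hUm hs]
    have hsplit : U ⁻¹' s =
        (W ⁻¹' Iic (1/2 : ℝ) ∩ V ⁻¹' (f ⁻¹' s)) ∪ (W ⁻¹' Ioi (1/2 : ℝ) ∩ V ⁻¹' (g ⁻¹' s)) := by
      ext ω
      simp only [mem_union, mem_inter_iff, mem_preimage, mem_Iic, mem_Ioi, hU ω, hfv, hgv]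
      by_cases h : W ω ≤ (2⁻¹:ℝ)
      · simp [h, not_lt.mpr h]
      · simp [h, not_le.mp h]
    have hdisj : Disjoint (W ⁻¹' Iic (1/2 : ℝ) ∩ V ⁻¹' (f ⁻¹' s))
        (W ⁻¹' Ioi (1/2 : ℝ) ∩ V ⁻¹' (g ⁻¹' s)) := by
      refine Set.disjoint_left.mpr fun ω h1 h2 => ?_
      have ha1 : W ω ≤ 1/2 := h1.1
      have ha2 : (1/2:ℝ) < W ω := h2.1
      linarith
    have key : volume (s ∩ Icc (0:ℝ) (1/2)) + volume (s ∩ Icc (1/2 : ℝ) 1)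
        = volume (s ∩ Icc (0:ℝ) 1) := by
      have h1 : volume (s ∩ Icc (1/2 : ℝ) 1) = volume (s ∩ Ioc (1/2 : ℝ) 1) :=
        measure_congr ((Filter.EventuallyEq.refl _ s).inter Ioc_ae_eq_Icc.symm)
      have h2 : s ∩ Icc (0:ℝ) 1 = (s ∩ Icc 0 (1/2)) ∪ (s ∩ Ioc (1/2 : ℝ) 1) := by
        ext x
        simp only [mem_inter_iff, mem_union, mem_Icc, mem_Ioc]
        constructor
        · rintro ⟨hx, h0, h1'⟩
          by_cases hc : x ≤ 1/2
          · exact Or.inl ⟨hx, h0, hc⟩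
          · exact Or.inr ⟨hx, not_le.mp hc, h1'⟩
        · rintro (⟨hx, h0, hc⟩ | ⟨hx, hc, h1'⟩)
          · exact ⟨hx, h0, by linarith⟩
          · exact ⟨hx, by linarith, h1'⟩
      have hd : Disjoint (s ∩ Icc (0:ℝ) (1/2)) (s ∩ Ioc (1/2 : ℝ) 1) := by
        refine Set.disjoint_left.mpr fun x hx1 hx2 => ?_
        exact absurd hx1.2.2 (not_le.mpr hx2.2.1)
      rw [h1, h2, measure_union hd (hs.inter measurableSet_Ioc)]
    have h2h : ENNReal.ofReal 2 * ENNReal.ofReal (1/2) = 1 := by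
      rw [← ENNReal.ofReal_mul (by norm_num)]; norm_num
    have ha : ∀ x : ENNReal, ENNReal.ofReal 2 * x * ENNReal.ofReal (1/2) = x := fun x => by
      rw [mul_comm _ x, mul_assoc, h2h, mul_one]
    rw [hsplit, measure_union hdisj ((hWm measurableSet_Ioi).inter (hVm (hgm hs))),
      Set.inter_comm (W ⁻¹' Iic (1/2:ℝ)), Set.inter_comm (W ⁻¹' Ioi (1/2:ℝ)),
      hind.measure_inter_preimage_eq_mul _ _ (hfm hs) measurableSet_Iic,
      hind.measure_inter_preimage_eq_mul _ _ (hgm hs) measurableSet_Ioi,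
      hW1, hW2, ← Measure.map_apply hVm (hfm hs), ← Measure.map_apply hVm (hgm hs), hVu,
      ← Measure.map_apply hfm hs, ← Measure.map_apply hgm hs, hmapf, hmapg]
    simp only [Measure.smul_apply, smul_eq_mul, Measure.restrict_apply hs]
    rw [ha, ha, key]
  · filter_upwards [hV01] with ω hω
    rw [hU ω]
    split_ifs with h
    · have : 2 * ((1 - V ω) / 2) - 1 = -(V ω) := by ring
      rw [this, abs_neg, abs_of_nonneg hω.1]
    · have : 2 * ((1 + V ω) / 2) - 1 = V ω := by ring
      rw [this, abs_of_nonneg hω.1]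
end

section
/- Let X be a random variable with absolutely continuous, strictly increasing cdf F_X on ℝ, let T be a volatility proxy transformation with change point μ_T and profile g_T, set δ = F_X(μ_T), and let 𝒱 be given by 𝒱(u) = F_X(μ_T + g_T(μ_T − F_X⁻¹(u))) − u for u ≤ δ and 𝒱(u) = u − F_X(μ_T − g_T⁻¹(F_X⁻¹(u) − μ_T)) for u > δ. Then: (1) 𝒱(0) = 𝒱(1) = 1; (2) 𝒱(δ) = 0; (3) 𝒱 is continuous on [0,1]; (4) 𝒱 is strictly decreasing on [0,δ] and strictly increasing on [δ,1]; (5) every u ∈ [0,1]\{δ} has a dual point u* on the opposite side of δ with 𝒱(u*) = 𝒱(u) and |u* − u| = 𝒱(u). -/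
/-!
Write `R` for the reflection of the line at `μ_T` through the profile:
`R x = μ_T + g_T(μ_T - x)` for `x ≤ μ_T` and `R x = μ_T - g_T⁻¹(x - μ_T)` for `x > μ_T`.
Since `g_T` is an increasing bijection of `[0,∞)` fixing `0`, `R` is a decreasing involution of
`ℝ` fixing `μ_T`, and conjugating it by `F_X` gives a decreasing involution `u ↦ u*` of `[0,1]`
fixing `δ`. Both branches of `𝒱` are `|u* - u|`, and all five properties hold for any such
involution: a monotone bijection of an interval is continuous, `u*` lies on the other side of `δ`
from `u`, and `𝒱(u*) = 𝒱(u)` because `u** = u`.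
-/

open Set MeasureTheory

section Involution

variable {α : Type*} [LinearOrder α] {s : α → α} {a b δ x : α}

theorem StrictAntiOn.continuousOn_of_involutive [TopologicalSpace α] [OrderTopology α]
    (hs : StrictAntiOn s (Icc a b)) (hmaps : MapsTo s (Icc a b) (Icc a b))
    (hinv : ∀ x ∈ Icc a b, s (s x) = x) : ContinuousOn s (Icc a b) := by
  let e : Icc a b → (Icc a b)ᵒᵈ := fun x => OrderDual.toDual ⟨s x, hmaps x.2⟩
  have he : StrictMono e := fun x y hxy => hs x.2 y.2 hxy
  have he_surj : Function.Surjective e := fun y =>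
    ⟨⟨s (OrderDual.ofDual y : Icc a b), hmaps (OrderDual.ofDual y).2⟩,
      congrArg OrderDual.toDual (Subtype.ext (hinv _ (OrderDual.ofDual y).2))⟩
  rw [continuousOn_iff_continuous_domRestrict]
  exact continuous_subtype_val.comp
    (continuous_ofDual.comp (he.orderIsoOfSurjective e he_surj).continuous)

theorem AntitoneOn.apply_left_of_involutive (hs : AntitoneOn s (Icc a b))
    (hmaps : MapsTo s (Icc a b) (Icc a b)) (hinv : ∀ x ∈ Icc a b, s (s x) = x) (hab : a ≤ b) :
    s a = b := by
  have hb : b ∈ Icc a b := right_mem_Icc.2 hab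
  refine le_antisymm (hmaps (left_mem_Icc.2 hab)).2 ?_
  calc b = s (s b) := (hinv b hb).symm
    _ ≤ s a := hs (left_mem_Icc.2 hab) (hmaps hb) (hmaps hb).1

theorem AntitoneOn.apply_right_of_involutive (hs : AntitoneOn s (Icc a b))
    (hmaps : MapsTo s (Icc a b) (Icc a b)) (hinv : ∀ x ∈ Icc a b, s (s x) = x) (hab : a ≤ b) :
    s b = a := by
  have ha : a ∈ Icc a b := left_mem_Icc.2 hab
  refine le_antisymm ?_ (hmaps (right_mem_Icc.2 hab)).1
  calc s b ≤ s (s a) := hs (hmaps ha) (right_mem_Icc.2 hab) (hmaps ha).2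
    _ = a := hinv a ha

theorem AntitoneOn.le_apply_of_le_fixedPoint (hs : AntitoneOn s (Icc a b)) (hx : x ∈ Icc a b)
    (hδ : δ ∈ Icc a b) (hfix : s δ = δ) (hxδ : x ≤ δ) : x ≤ s x :=
  hxδ.trans (hfix ▸ hs hx hδ hxδ)

theorem AntitoneOn.apply_le_of_fixedPoint_le (hs : AntitoneOn s (Icc a b)) (hx : x ∈ Icc a b)
    (hδ : δ ∈ Icc a b) (hfix : s δ = δ) (hδx : δ ≤ x) : s x ≤ x :=
  (hfix ▸ hs hδ hx hδx).trans hδx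

end Involution

theorem vTransform_of_strictAntiOn_involutive {s : ℝ → ℝ} {δ : ℝ}
    (hs : StrictAntiOn s (Icc 0 1))
    (hmaps : MapsTo s (Icc 0 1) (Icc 0 1)) (hinv : ∀ x ∈ Icc 0 1, s (s x) = x)
    (hδ : δ ∈ Icc 0 1) (hfix : s δ = δ) {V : ℝ → ℝ}
    (hV : ∀ u ∈ Icc 0 1, V u = |s u - u|) :
    V 0 = 1 ∧ V 1 = 1 ∧ V δ = 0 ∧ ContinuousOn V (Icc 0 1) ∧
    StrictAntiOn V (Icc 0 δ) ∧ StrictMonoOn V (Icc δ 1) ∧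
    (∀ u ∈ Icc (0:ℝ) 1, u ≠ δ →
      ∃ us ∈ Icc (0:ℝ) 1, ((u < δ ∧ δ < us) ∨ (us < δ ∧ δ < u)) ∧
        V us = V u ∧ |us - u| = V u) := by
  have h01 : (0:ℝ) ≤ 1 := zero_le_one
  have hs0 := hs.antitoneOn.apply_left_of_involutive hmaps hinv h01
  have hs1 := hs.antitoneOn.apply_right_of_involutive hmaps hinv h01
  have hleft : ∀ u ∈ Icc 0 δ, V u = s u - u := fun u hu => by
    have hu' : u ∈ Icc (0:ℝ) 1 := ⟨hu.1, hu.2.trans hδ.2⟩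
    rw [hV u hu',
      abs_of_nonneg (sub_nonneg.2 (hs.antitoneOn.le_apply_of_le_fixedPoint hu' hδ hfix hu.2))]
  have hright : ∀ u ∈ Icc δ 1, V u = u - s u := fun u hu => by
    have hu' : u ∈ Icc (0:ℝ) 1 := ⟨hδ.1.trans hu.1, hu.2⟩
    rw [hV u hu', abs_sub_comm,
      abs_of_nonneg (sub_nonneg.2 (hs.antitoneOn.apply_le_of_fixedPoint_le hu' hδ hfix hu.1))]
  refine ⟨?_, ?_, ?_, ?_, ?_, ?_, ?_⟩
  · simp [hV 0 (left_mem_Icc.2 h01), hs0]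
  · simp [hV 1 (right_mem_Icc.2 h01), hs1]
  · simp [hV δ hδ, hfix]
  · exact ((hs.continuousOn_of_involutive hmaps hinv).sub continuousOn_id).abs.congr
      fun u hu => hV u hu
  · intro u hu v hv huv
    rw [hleft u hu, hleft v hv]
    linarith [hs ⟨hu.1, hu.2.trans hδ.2⟩ ⟨hv.1, hv.2.trans hδ.2⟩ huv]
  · intro u hu v hv huv
    rw [hright u hu, hright v hv]
    linarith [hs ⟨hδ.1.trans hu.1, hu.2⟩ ⟨hδ.1.trans hv.1, hv.2⟩ huv]
  · intro u hu hne
    refine ⟨s u, hmaps hu, ?_, by rw [hV _ (hmaps hu), hV u hu, hinv u hu, abs_sub_comm],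
      (hV u hu).symm⟩
    rcases hne.lt_or_gt with hlt | hgt
    · exact Or.inl ⟨hlt, hfix ▸ hs hu hδ hlt⟩
    · exact Or.inr ⟨hfix ▸ hs hδ hu hgt, hgt⟩

noncomputable def profileReflection (g ginv : ℝ → ℝ) (μ x : ℝ) : ℝ :=
  if x ≤ μ then μ + g (μ - x) else μ - ginv (x - μ)

/-- Off `(0,1)` the map `u ↦ 1 - u` only swaps the endpoints `0 ↔ 1`. -/
noncomputable def conjugateReflection (F Finv R : ℝ → ℝ) (u : ℝ) : ℝ :=
  if u ∈ Ioo 0 1 then F (R (Finv u)) else 1 - u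

theorem StrictMonoOn.of_comp_eq {α β γ : Type*} [LinearOrder α] [LinearOrder β] [Preorder γ]
    {T₁ : α → γ} {T₂ : β → γ} {g : α → β} {s : Set α} {t : Set β}
    (hT₁ : StrictMonoOn T₁ s) (hT₂ : StrictMonoOn T₂ t) (hg : MapsTo g s t)
    (hcomp : ∀ x ∈ s, T₂ (g x) = T₁ x) : StrictMonoOn g s := fun x hx y hy hxy =>
  (hT₂.lt_iff_lt (hg hx) (hg hy)).1 (by rw [hcomp x hx, hcomp y hy]; exact hT₁ hx hy hxy)

section ProfileReflection

variable {g ginv : ℝ → ℝ} {μ x : ℝ}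

theorem profileReflection_of_le (hx : x ≤ μ) : profileReflection g ginv μ x = μ + g (μ - x) :=
  if_pos hx

theorem profileReflection_of_ge (hinv : LeftInvOn ginv g (Ici 0)) (hg0 : g 0 = 0) (hx : μ ≤ x) :
    profileReflection g ginv μ x = μ - ginv (x - μ) := by
  rcases hx.eq_or_lt with rfl | hlt
  · have hginv0 : ginv 0 = 0 := by simpa [hg0] using hinv self_mem_Ici
    simp [profileReflection, hg0, hginv0]
  · exact if_neg (not_le.2 hlt)

theorem profileReflection_self (hg0 : g 0 = 0) : profileReflection g ginv μ μ = μ := by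
  simp [profileReflection, hg0]

theorem profileReflection_involutive (hinv : InvOn ginv g (Ici 0) (Ici 0))
    (hg : MapsTo g (Ici 0) (Ici 0)) (hginv : MapsTo ginv (Ici 0) (Ici 0)) (hg0 : g 0 = 0) :
    Function.Involutive (profileReflection g ginv μ) := by
  intro x
  rcases le_total x μ with hx | hx
  · have hμx : μ - x ∈ Ici 0 := sub_nonneg.2 hx
    rw [profileReflection_of_le hx, profileReflection_of_ge hinv.1 hg0
      (le_add_of_nonneg_right (hg hμx)), add_sub_cancel_left, hinv.1 hμx, sub_sub_cancel]
  · have hxμ : x - μ ∈ Ici 0 := sub_nonneg.2 hx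
    rw [profileReflection_of_ge hinv.1 hg0 hx,
      profileReflection_of_le (sub_le_self _ (hginv hxμ)), sub_sub_cancel, hinv.2 hxμ,
      add_sub_cancel]

theorem profileReflection_strictAnti (hgm : StrictMonoOn g (Ici 0))
    (hinv : InvOn ginv g (Ici 0) (Ici 0)) (hg : MapsTo g (Ici 0) (Ici 0))
    (hginv : MapsTo ginv (Ici 0) (Ici 0)) (hg0 : g 0 = 0) :
    StrictAnti (profileReflection g ginv μ) := by
  refine Antitone.strictAnti_of_injective (fun x y hxy => ?_)
    (profileReflection_involutive hinv hg hginv hg0).injective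
  have hginvm : MonotoneOn ginv (Ici 0) :=
    Function.monotoneOn_of_rightInvOn_of_mapsTo hgm.monotoneOn hinv.2 hginv
  rcases le_total y μ with hyμ | hμy
  · rw [profileReflection_of_le hyμ, profileReflection_of_le (hxy.trans hyμ)]
    linarith [hgm.monotoneOn (sub_nonneg.2 hyμ) (sub_nonneg.2 (hxy.trans hyμ))
      (sub_le_sub_left hxy μ)]
  rw [profileReflection_of_ge hinv.1 hg0 hμy]
  rcases le_total x μ with hxμ | hμx
  · rw [profileReflection_of_le hxμ]
    have hgx : 0 ≤ g (μ - x) := hg (sub_nonneg.2 hxμ)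
    have hginvy : 0 ≤ ginv (y - μ) := hginv (sub_nonneg.2 hμy)
    linarith
  · rw [profileReflection_of_ge hinv.1 hg0 hμx]
    exact sub_le_sub_left
      (hginvm (sub_nonneg.2 hμx) (sub_nonneg.2 hμy) (sub_le_sub_right hxy μ)) μ

end ProfileReflection

section ConjugateReflection

variable {F Finv R : ℝ → ℝ} {u : ℝ}

theorem conjugateReflection_of_mem_Ioo (hu : u ∈ Ioo 0 1) :
    conjugateReflection F Finv R u = F (R (Finv u)) :=
  if_pos hu

theorem conjugateReflection_of_notMem_Ioo (hu : u ∉ Ioo 0 1) :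
    conjugateReflection F Finv R u = 1 - u :=
  if_neg hu

theorem conjugateReflection_mapsTo (hF : ∀ x, F x ∈ Ioo 0 1) :
    MapsTo (conjugateReflection F Finv R) (Icc 0 1) (Icc 0 1) := by
  intro u hu
  by_cases hu' : u ∈ Ioo 0 1
  · rw [conjugateReflection_of_mem_Ioo hu']
    exact Ioo_subset_Icc_self (hF _)
  · rw [conjugateReflection_of_notMem_Ioo hu']
    exact ⟨sub_nonneg.2 hu.2, sub_le_self _ hu.1⟩

theorem conjugateReflection_involutive (hFm : StrictMono F) (hF : ∀ x, F x ∈ Ioo 0 1)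
    (hFinv : RightInvOn Finv F (Ioo 0 1)) (hR : Function.Involutive R) :
    Function.Involutive (conjugateReflection F Finv R) := by
  intro u
  by_cases hu : u ∈ Ioo 0 1
  · rw [conjugateReflection_of_mem_Ioo hu, conjugateReflection_of_mem_Ioo (hF _),
      hFm.injective (hFinv (hF _)), hR, hFinv hu]
  · have hu' : 1 - u ∉ Ioo 0 1 := fun h => hu ⟨by linarith [h.2], by linarith [h.1]⟩
    rw [conjugateReflection_of_notMem_Ioo hu, conjugateReflection_of_notMem_Ioo hu', sub_sub_cancel]

theorem conjugateReflection_strictAntiOn (hFm : StrictMono F) (hF : ∀ x, F x ∈ Ioo 0 1)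
    (hFinv : RightInvOn Finv F (Ioo 0 1)) (hR : StrictAnti R) :
    StrictAntiOn (conjugateReflection F Finv R) (Icc 0 1) := by
  intro u hu v hv huv
  by_cases hu' : u ∈ Ioo 0 1 <;> by_cases hv' : v ∈ Ioo 0 1
  · rw [conjugateReflection_of_mem_Ioo hu', conjugateReflection_of_mem_Ioo hv']
    refine hFm (hR ?_)
    rwa [← hFm.lt_iff_lt, hFinv hu', hFinv hv']
  · rw [conjugateReflection_of_mem_Ioo hu', conjugateReflection_of_notMem_Ioo hv']
    have hv1 : 1 ≤ v := by_contra fun h => hv' ⟨hu'.1.trans huv, lt_of_not_ge h⟩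
    linarith [(hF (R (Finv u))).1]
  · rw [conjugateReflection_of_notMem_Ioo hu', conjugateReflection_of_mem_Ioo hv']
    have hu0 : u ≤ 0 := by_contra fun h => hu' ⟨lt_of_not_ge h, huv.trans hv'.2⟩
    linarith [(hF (R (Finv v))).2]
  · rw [conjugateReflection_of_notMem_Ioo hu', conjugateReflection_of_notMem_Ioo hv']
    linarith

theorem conjugateReflection_apply_eq_self (hFm : StrictMono F) (hF : ∀ x, F x ∈ Ioo 0 1)
    (hFinv : RightInvOn Finv F (Ioo 0 1)) {μ : ℝ} (hRμ : R μ = μ) :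
    conjugateReflection F Finv R (F μ) = F μ := by
  rw [conjugateReflection_of_mem_Ioo (hF μ), hFm.injective (hFinv (hF μ)), hRμ]

end ConjugateReflection

theorem abs_conjugateReflection_profileReflection_sub {F Finv g ginv : ℝ → ℝ} {μ u : ℝ}
    (hFm : StrictMono F) (hFinv : RightInvOn Finv F (Ioo 0 1))
    (hR : Antitone (profileReflection g ginv μ)) (hg0 : g 0 = 0) (hu : u ∈ Icc 0 1) :
    |conjugateReflection F Finv (profileReflection g ginv μ) u - u| =
      if u = 0 ∨ u = 1 then 1
      else if u ≤ F μ then F (μ + g (μ - Finv u)) - u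
      else u - F (μ - ginv (Finv u - μ)) := by
  by_cases hu' : u ∈ Ioo 0 1
  · have hFu : F (Finv u) = u := hFinv hu'
    rw [if_neg (by rintro (rfl | rfl) <;> simp at hu'), conjugateReflection_of_mem_Ioo hu']
    split_ifs with huμ
    · have hle : Finv u ≤ μ := by rwa [← hFm.le_iff_le, hFu]
      have hRu : μ ≤ profileReflection g ginv μ (Finv u) :=
        (profileReflection_self hg0).symm.trans_le (hR hle)
      rw [← profileReflection_of_le hle,
        abs_of_nonneg (sub_nonneg.2 (huμ.trans (hFm.monotone hRu)))]
    · have hlt : μ < Finv u := by rwa [← hFm.lt_iff_lt, hFu, ← not_le]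
      have hRu : profileReflection g ginv μ (Finv u) ≤ μ :=
        (hR hlt.le).trans_eq (profileReflection_self hg0)
      rw [abs_of_nonpos (sub_nonpos.2 ((hFm.monotone hRu).trans (le_of_not_ge huμ))), neg_sub]
      exact congrArg (u - F ·) (if_neg (not_le.2 hlt))
  · have hu01 : u = 0 ∨ u = 1 := by
      by_contra h
      exact hu' ⟨hu.1.lt_of_ne' fun h0 => h (Or.inl h0), hu.2.lt_of_ne fun h1 => h (Or.inr h1)⟩
    rw [if_pos hu01, conjugateReflection_of_notMem_Ioo hu']
    rcases hu01 with rfl | rfl <;> norm_num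

theorem stmt_12_general {Ω : Type*} [MeasurableSpace Ω] (P : Measure Ω) [IsProbabilityMeasure P]
    (X : Ω → ℝ)
    -- `F` is the cdf of `X`; it is absolutely continuous and strictly increasing
    (F : ℝ → ℝ) (hF : ∀ x, F x = (P {ω | X ω ≤ x}).toReal)
    (hFm : StrictMono F)
    -- `Finv` inverts `F` on `(0,1)`
    (Finv : ℝ → ℝ) (hFinv : ∀ u ∈ Ioo (0:ℝ) 1, F (Finv u) = u)
    -- volatility proxy transformation with change point `μT`
    (μT : ℝ) (T₁ T₂ : ℝ → ℝ)
    (hT₁m : StrictMonoOn T₁ (Ici 0)) (hT₂m : StrictMonoOn T₂ (Ici 0))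
    (h00 : T₁ 0 = T₂ 0)
    -- profile function `g = T₂⁻¹ ∘ T₁` on `[0,∞)`, with inverse `ginv = T₁⁻¹ ∘ T₂`
    (g : ℝ → ℝ) (hg : ∀ x ∈ Ici (0:ℝ), 0 ≤ g x ∧ T₂ (g x) = T₁ x)
    (ginv : ℝ → ℝ) (hginv : ∀ x ∈ Ici (0:ℝ), ginv (g x) = x)
    (hginv' : ∀ y ∈ Ici (0:ℝ), 0 ≤ ginv y ∧ g (ginv y) = y)
    -- the fulcrum `δ = F(μT)` and the constructed v-transform `𝒱`
    (δ : ℝ) (hδ : δ = F μT)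
    (calV : ℝ → ℝ)
    (hcalV : ∀ u ∈ Icc (0:ℝ) 1, calV u =
      if u = 0 ∨ u = 1 then 1
      else if u ≤ δ then F (μT + g (μT - Finv u)) - u
      else u - F (μT - ginv (Finv u - μT))) :
    -- (1) `𝒱(0) = 𝒱(1) = 1`
    calV 0 = 1 ∧ calV 1 = 1 ∧
    -- (2) `𝒱(δ) = 0`
    calV δ = 0 ∧
    -- (3) `𝒱` is continuous on `[0,1]`
    ContinuousOn calV (Icc 0 1) ∧
    -- (4) strictly decreasing on `[0,δ]` and strictly increasing on `[δ,1]`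
    StrictAntiOn calV (Icc 0 δ) ∧ StrictMonoOn calV (Icc δ 1) ∧
    -- (5) square property: dual points
    (∀ u ∈ Icc (0:ℝ) 1, u ≠ δ →
      ∃ us ∈ Icc (0:ℝ) 1, ((u < δ ∧ δ < us) ∨ (us < δ ∧ δ < u)) ∧
        calV us = calV u ∧ |us - u| = calV u) := by
  subst hδ
  have hF01 : ∀ x, F x ∈ Ioo 0 1 :=
    hFm.mem_Ioo_of_forall_mem_Icc fun x => hF x ▸ ⟨ENNReal.toReal_nonneg, measureReal_le_one⟩
  have hgmaps : MapsTo g (Ici 0) (Ici 0) := fun x hx => (hg x hx).1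
  have hgm : StrictMonoOn g (Ici 0) := hT₁m.of_comp_eq hT₂m hgmaps fun x hx => (hg x hx).2
  have hg0 : g 0 = 0 :=
    hT₂m.injOn (hgmaps self_mem_Ici) self_mem_Ici (by rw [(hg 0 self_mem_Ici).2, h00])
  have hinv : InvOn ginv g (Ici 0) (Ici 0) := ⟨hginv, fun y hy => (hginv' y hy).2⟩
  have hginvmaps : MapsTo ginv (Ici 0) (Ici 0) := fun y hy => (hginv' y hy).1
  have hR := profileReflection_strictAnti (μ := μT) hgm hinv hgmaps hginvmaps hg0
  have hRR := profileReflection_involutive (μ := μT) hinv hgmaps hginvmaps hg0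
  exact vTransform_of_strictAntiOn_involutive (conjugateReflection_strictAntiOn hFm hF01 hFinv hR)
    (conjugateReflection_mapsTo hF01)
    (fun u _ => conjugateReflection_involutive hFm hF01 hFinv hRR u)
    (Ioo_subset_Icc_self (hF01 μT))
    (conjugateReflection_apply_eq_self hFm hF01 hFinv (profileReflection_self hg0))
    fun u hu => by
      rw [hcalV u hu, abs_conjugateReflection_profileReflection_sub hFm hFinv hR.antitone hg0 hu]

theorem stmt_12 {Ω : Type*} [MeasurableSpace Ω] (P : Measure Ω) [IsProbabilityMeasure P]
    (X : Ω → ℝ) (hX : Measurable X)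
    -- `F` is the cdf of `X`; it is absolutely continuous and strictly increasing
    (F : ℝ → ℝ) (hF : ∀ x, F x = (P {ω | X ω ≤ x}).toReal)
    (habs : Measure.map X P ≪ volume) (hFm : StrictMono F)
    -- `Finv` inverts `F` on `(0,1)`
    (Finv : ℝ → ℝ) (hFinv : ∀ u ∈ Ioo (0:ℝ) 1, F (Finv u) = u)
    -- volatility proxy transformation with change point `μT`
    (μT : ℝ) (T₁ T₂ : ℝ → ℝ)
    (hT₁m : StrictMonoOn T₁ (Ici 0)) (hT₂m : StrictMonoOn T₂ (Ici 0))
    (hT₁c : ContinuousOn T₁ (Ici 0)) (hT₂c : ContinuousOn T₂ (Ici 0))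
    (hT₁d : DifferentiableOn ℝ T₁ (Ici 0)) (hT₂d : DifferentiableOn ℝ T₂ (Ici 0))
    (h00 : T₁ 0 = T₂ 0)
    -- profile function `g = T₂⁻¹ ∘ T₁` on `[0,∞)`, with inverse `ginv = T₁⁻¹ ∘ T₂`
    (g : ℝ → ℝ) (hg : ∀ x ∈ Ici (0:ℝ), 0 ≤ g x ∧ T₂ (g x) = T₁ x)
    (ginv : ℝ → ℝ) (hginv : ∀ x ∈ Ici (0:ℝ), ginv (g x) = x)
    (hginv' : ∀ y ∈ Ici (0:ℝ), 0 ≤ ginv y ∧ g (ginv y) = y)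
    -- the fulcrum `δ = F(μT)` and the constructed v-transform `𝒱`
    (δ : ℝ) (hδ : δ = F μT)
    (calV : ℝ → ℝ)
    (hcalV : ∀ u ∈ Icc (0:ℝ) 1, calV u =
      if u = 0 ∨ u = 1 then 1
      else if u ≤ δ then F (μT + g (μT - Finv u)) - u
      else u - F (μT - ginv (Finv u - μT))) :
    -- (1) `𝒱(0) = 𝒱(1) = 1`
    calV 0 = 1 ∧ calV 1 = 1 ∧
    -- (2) `𝒱(δ) = 0`
    calV δ = 0 ∧
    -- (3) `𝒱` is continuous on `[0,1]`
    ContinuousOn calV (Icc 0 1) ∧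
    -- (4) strictly decreasing on `[0,δ]` and strictly increasing on `[δ,1]`
    StrictAntiOn calV (Icc 0 δ) ∧ StrictMonoOn calV (Icc δ 1) ∧
    -- (5) square property: dual points
    (∀ u ∈ Icc (0:ℝ) 1, u ≠ δ →
      ∃ us ∈ Icc (0:ℝ) 1, ((u < δ ∧ δ < us) ∨ (us < δ ∧ δ < u)) ∧
        calV us = calV u ∧ |us - u| = calV u) :=
  stmt_12_general P X F hF hFm Finv hFinv μT T₁ T₂ hT₁m hT₂m h00 g hg ginv hginv hginv' δ hδ calV
    hcalV
end

section
/- Let 𝒱 : [0,1] → [0,1] have the v-transform properties with fulcrum δ ∈ (0,1) and let U be uniformly distributed on [0,1]. Then 𝒱(U) is uniformly distributed on [0,1]; in particular, for u ∈ [0,1]\{δ} with v = 𝒱(u) and dual point u*, one has P(𝒱(U) ≤ v) = |u* − u| = v. -/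
/-!
STATEMENT 13: a v-transform is uniformity preserving: if `U` is uniform on `[0,1]`
then so is `𝒱(U)`; in particular `P(𝒱(U) ≤ v) = |u* - u| = v` for `v = 𝒱(u)` and
dual point `u*`.
-/

open Set MeasureTheory

/-- key set-measure lemma: the sublevel set of `V` in `[0,1]` has the same volume as
`Iic v ∩ [0,1]`. -/
lemma vtrans_sublevel (V : ℝ → ℝ) (δ : ℝ) (hV : IsVTransform V δ) (v : ℝ) :
    volume ({x | V x ≤ v} ∩ Icc (0:ℝ) 1) = volume (Iic v ∩ Icc (0:ℝ) 1) := by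
  obtain ⟨hδ, hmaps, h0, h1, hδ0, hcont, hanti, hmono, hsq⟩ := hV
  have hδ01 : δ ∈ Icc (0:ℝ) 1 := ⟨hδ.1.le, hδ.2.le⟩
  rcases lt_or_ge v 0 with hv | hv0
  · have e1 : {x | V x ≤ v} ∩ Icc (0:ℝ) 1 = (∅ : Set ℝ) := by
      apply eq_empty_iff_forall_notMem.mpr
      rintro x ⟨hxv, hx01⟩
      exact absurd (le_trans (hmaps hx01).1 hxv) (not_le.2 hv)
    have e2 : Iic v ∩ Icc (0:ℝ) 1 = (∅ : Set ℝ) := by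
      apply eq_empty_iff_forall_notMem.mpr
      rintro x ⟨hx, hx0, hx1⟩
      exact absurd (le_trans hx0 hx) (not_le.2 hv)
    rw [e1, e2]
  rcases le_or_gt 1 v with hv1 | hv1
  · have e1 : {x | V x ≤ v} ∩ Icc (0:ℝ) 1 = Icc (0:ℝ) 1 := by
      ext x
      simp only [mem_inter_iff, mem_setOf_eq, and_iff_right_iff_imp]
      intro hx
      exact le_trans (hmaps hx).2 hv1
    have e2 : Iic v ∩ Icc (0:ℝ) 1 = Icc (0:ℝ) 1 := by
      ext x
      simp only [mem_inter_iff, mem_Iic, mem_Icc, and_iff_right_iff_imp]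
      intro hx
      linarith [hx.2]
    rw [e1, e2]
  -- main case 0 ≤ v < 1
  · -- find a ∈ [0, δ] with V a = v
    have hsub1 : Icc (0:ℝ) δ ⊆ Icc 0 1 := Icc_subset_Icc le_rfl hδ.2.le
    have hsub2 : Icc δ (1:ℝ) ⊆ Icc 0 1 := Icc_subset_Icc hδ.1.le le_rfl
    have ha : ∃ a ∈ Icc (0:ℝ) δ, V a = v := by
      have := intermediate_value_Icc' hδ.1.le (hcont.mono hsub1)
      have hvmem : v ∈ Icc (V δ) (V 0) := by rw [hδ0, h0]; exact ⟨hv0, hv1.le⟩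
      obtain ⟨a, ha1, ha2⟩ := this hvmem
      exact ⟨a, ha1, ha2⟩
    have hb : ∃ b ∈ Icc δ (1:ℝ), V b = v := by
      have := intermediate_value_Icc hδ.2.le (hcont.mono hsub2)
      have hvmem : v ∈ Icc (V δ) (V 1) := by rw [hδ0, h1]; exact ⟨hv0, hv1.le⟩
      obtain ⟨b, hb1, hb2⟩ := this hvmem
      exact ⟨b, hb1, hb2⟩
    obtain ⟨a, haδ, haV⟩ := ha
    obtain ⟨b, hbδ, hbV⟩ := hb
    have ha01 : a ∈ Icc (0:ℝ) 1 := hsub1 haδ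
    have hb01 : b ∈ Icc (0:ℝ) 1 := hsub2 hbδ
    -- sublevel set is Icc a b
    have e1 : {x | V x ≤ v} ∩ Icc (0:ℝ) 1 = Icc a b := by
      ext x
      simp only [mem_inter_iff, mem_setOf_eq, mem_Icc]
      constructor
      · rintro ⟨hxv, hx0, hx1⟩
        rcases le_or_gt x δ with hxδ | hxδ
        · have hax : a ≤ x := by
            by_contra hax
            push_neg at hax
            have := hanti ⟨hx0, hxδ⟩ haδ hax
            rw [haV] at this; linarith
          exact ⟨hax, le_trans hxδ hbδ.1⟩
        · have hxb : x ≤ b := by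
            by_contra hxb
            push_neg at hxb
            have := hmono hbδ ⟨hxδ.le, hx1⟩ hxb
            rw [hbV] at this; linarith
          exact ⟨le_trans haδ.2 hxδ.le, hxb⟩
      · rintro ⟨hax, hxb⟩
        have hx0 : (0:ℝ) ≤ x := le_trans haδ.1 hax
        have hx1 : x ≤ 1 := le_trans hxb hbδ.2
        refine ⟨?_, hx0, hx1⟩
        rcases le_or_gt x δ with hxδ | hxδ
        · have := hanti.antitoneOn haδ ⟨hx0, hxδ⟩ hax
          rw [haV] at this; exact this
        · have := hmono.monotoneOn ⟨hxδ.le, hx1⟩ hbδ hxb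
          rw [hbV] at this; exact this
    -- b - a = v
    have hba : b - a = v := by
      rcases eq_or_lt_of_le hv0 with hv0' | hvpos
      · have haeq : a = δ := by
          apply hanti.injOn haδ (right_mem_Icc.2 hδ.1.le)
          rw [haV, hδ0, hv0']
        have hbeq : b = δ := by
          apply hmono.injOn hbδ (left_mem_Icc.2 hδ.2.le)
          rw [hbV, hδ0, hv0']
        rw [haeq, hbeq, ← hv0']; ring
      · have haδ' : a < δ := by
          rcases lt_or_eq_of_le haδ.2 with h | h
          · exact h
          · exfalso; rw [h, hδ0] at haV; linarith
        obtain ⟨us, hus01, hcase, husV, husabs⟩ := hsq a ha01 (ne_of_lt haδ')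
        have husδ : δ < us := by
          rcases hcase with ⟨_, h⟩ | ⟨_, h⟩
          · exact h
          · linarith
        have husb : us = b := by
          apply hmono.injOn ⟨husδ.le, hus01.2⟩ hbδ
          rw [husV, haV, hbV]
        rw [haV] at husabs
        rw [← husb]
        rwa [abs_of_nonneg (by linarith)] at husabs
    have e2 : Iic v ∩ Icc (0:ℝ) 1 = Icc (0:ℝ) v := by
      ext x
      simp only [mem_inter_iff, mem_Iic, mem_Icc]
      constructor
      · rintro ⟨h1, h2, _⟩; exact ⟨h2, h1⟩
      · rintro ⟨h1, h2⟩; exact ⟨h2, h1, by linarith⟩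
    rw [e1, e2, Real.volume_Icc, Real.volume_Icc, hba, sub_zero]

theorem stmt_13 {Ω : Type*} [MeasurableSpace Ω] (P : Measure Ω) [IsProbabilityMeasure P]
    (V : ℝ → ℝ) (δ : ℝ) (hV : IsVTransform V δ)
    (U : Ω → ℝ) (hUm : Measurable U)
    (hU : Measure.map U P = volume.restrict (Icc (0:ℝ) 1)) :
    Measure.map (fun ω => V (U ω)) P = volume.restrict (Icc (0:ℝ) 1) ∧
    ∀ u ∈ Icc (0:ℝ) 1, u ≠ δ → ∀ us ∈ Icc (0:ℝ) 1,
      ((u < δ ∧ δ < us) ∨ (us < δ ∧ δ < u)) → V us = V u → |us - u| = V u →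
        P {ω | V (U ω) ≤ V u} = ENNReal.ofReal |us - u| ∧
        P {ω | V (U ω) ≤ V u} = ENNReal.ofReal (V u) := by
  obtain ⟨hδ, hmaps, h0, h1, hδ0, hcont, hanti, hmono, hsq⟩ := hV
  -- the clamped version of V
  set V' : ℝ → ℝ := fun x => V (max 0 (min x 1)) with hV'def
  have hclamp : ∀ x ∈ Icc (0:ℝ) 1, V' x = V x := by
    intro x hx
    simp only [hV'def]
    rw [min_eq_left hx.2, max_eq_right hx.1]
  have hclampmem : ∀ x : ℝ, max 0 (min x 1) ∈ Icc (0:ℝ) 1 := by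
    intro x
    constructor
    · exact le_max_left _ _
    · exact max_le (by norm_num) (min_le_right _ _)
  have hV'cont : Continuous V' := by
    apply hcont.comp_continuous
    · exact continuous_const.max (continuous_id.min continuous_const)
    · exact hclampmem
  -- U ∈ [0,1] a.e.
  have hUae : ∀ᵐ ω ∂P, U ω ∈ Icc (0:ℝ) 1 := by
    have : P (U ⁻¹' (Icc (0:ℝ) 1)ᶜ) = 0 := by
      rw [← Measure.map_apply hUm measurableSet_Icc.compl, hU,
        Measure.restrict_apply measurableSet_Icc.compl]
      simp
    filter_upwards [measure_eq_zero_iff_ae_notMem.mp this] with ω hω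
    simpa using hω
  have hae : (fun ω => V (U ω)) =ᵐ[P] fun ω => V' (U ω) := by
    filter_upwards [hUae] with ω hω
    exact (hclamp _ hω).symm
  have hV'Um : Measurable fun ω => V' (U ω) := hV'cont.measurable.comp hUm
  have haem : AEMeasurable (fun ω => V (U ω)) P :=
    hV'Um.aemeasurable.congr hae.symm
  -- the pushforward equality
  have key : Measure.map (fun ω => V (U ω)) P = volume.restrict (Icc (0:ℝ) 1) := by
    rw [Measure.map_congr hae]
    have hcomp : (fun ω => V' (U ω)) = V' ∘ U := rfl
    rw [hcomp, ← Measure.map_map hV'cont.measurable hUm, hU]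
    refine Measure.ext_of_Iic _ _ (fun v => ?_)
    rw [Measure.map_apply hV'cont.measurable measurableSet_Iic,
      Measure.restrict_apply measurableSet_Iic,
      Measure.restrict_apply (hV'cont.measurable measurableSet_Iic)]
    have : V' ⁻¹' Iic v ∩ Icc (0:ℝ) 1 = {x | V x ≤ v} ∩ Icc (0:ℝ) 1 := by
      ext x
      simp only [mem_inter_iff, mem_preimage, mem_Iic, mem_setOf_eq]
      constructor
      · rintro ⟨h1, h2⟩
        rw [hclamp x h2] at h1
        exact ⟨h1, h2⟩
      · rintro ⟨h1, h2⟩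
        rw [hclamp x h2]
        exact ⟨h1, h2⟩
    rw [this]
    exact vtrans_sublevel V δ ⟨hδ, hmaps, h0, h1, hδ0, hcont, hanti, hmono, hsq⟩ v
  refine ⟨key, ?_⟩
  intro u hu hune us hus hcase husV husabs
  have hvmem : V u ∈ Icc (0:ℝ) 1 := hmaps hu
  have hP2 : P {ω | V (U ω) ≤ V u} = ENNReal.ofReal (V u) := by
    have : {ω | V (U ω) ≤ V u} = (fun ω => V (U ω)) ⁻¹' Iic (V u) := rfl
    rw [this, ← Measure.map_apply_of_aemeasurable haem measurableSet_Iic, key,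
      Measure.restrict_apply measurableSet_Iic]
    have : Iic (V u) ∩ Icc (0:ℝ) 1 = Icc (0:ℝ) (V u) := by
      ext x
      simp only [mem_inter_iff, mem_Iic, mem_Icc]
      constructor
      · rintro ⟨h1, h2, _⟩; exact ⟨h2, h1⟩
      · rintro ⟨h1, h2⟩; exact ⟨h2, h1, le_trans h2 hvmem.2⟩
    rw [this, Real.volume_Icc, sub_zero]
  exact ⟨by rw [hP2, husabs], hP2⟩
end

section
/- Let U be uniformly distributed on [0,1] and V = |2U − 1|. Then for all u, v ∈ [0,1], P(U ≤ u, V ≤ v) = max( min( u + v/2 − 1/2, v ), 0 ). -/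
/-!
STATEMENT 15: the copula of `(U, |2U-1|)` for uniform `U`:
`P(U ≤ u, |2U-1| ≤ v) = max(min(u + v/2 - 1/2, v), 0)` for `u, v ∈ [0,1]`.
-/

open Set MeasureTheory

theorem stmt_15 {Ω : Type*} [MeasurableSpace Ω] (P : Measure Ω) [IsProbabilityMeasure P]
    (U : Ω → ℝ) (hUm : Measurable U)
    (hU : Measure.map U P = volume.restrict (Icc (0:ℝ) 1)) :
    ∀ u ∈ Icc (0:ℝ) 1, ∀ v ∈ Icc (0:ℝ) 1,
      P {ω | U ω ≤ u ∧ |2 * U ω - 1| ≤ v}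
        = ENNReal.ofReal (max (min (u + v / 2 - 1 / 2) v) 0) := by
  intro u hu v hv
  obtain ⟨hu0, hu1⟩ := hu
  obtain ⟨hv0, hv1⟩ := hv
  have hSm : MeasurableSet {x : ℝ | x ≤ u ∧ |2 * x - 1| ≤ v} := by
    apply MeasurableSet.inter
    · exact measurableSet_le measurable_id measurable_const
    · exact measurableSet_le (((measurable_id.const_mul 2).sub measurable_const).abs) measurable_const
  have hpre : {ω | U ω ≤ u ∧ |2 * U ω - 1| ≤ v}
      = U ⁻¹' {x : ℝ | x ≤ u ∧ |2 * x - 1| ≤ v} := rfl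
  rw [hpre, ← Measure.map_apply hUm hSm, hU, Measure.restrict_apply hSm]
  have hset : {x : ℝ | x ≤ u ∧ |2 * x - 1| ≤ v} ∩ Icc (0:ℝ) 1
      = Icc ((1 - v) / 2) (min u ((1 + v) / 2)) := by
    ext x
    simp only [mem_inter_iff, mem_setOf_eq, mem_Icc, abs_le, le_min_iff]
    constructor
    · rintro ⟨⟨hx1, hx2, hx3⟩, _, _⟩
      refine ⟨by linarith, by linarith, by linarith⟩
    · rintro ⟨h1, h2, h3⟩
      refine ⟨⟨h2, by linarith, by linarith⟩, by linarith, by linarith⟩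
  rw [hset, Real.volume_Icc]
  rcases le_total u ((1 + v) / 2) with h | h
  · rw [min_eq_left h]
    rcases le_total (u + v / 2 - 1 / 2) 0 with h2 | h2
    · rw [min_eq_left (by linarith), max_eq_right h2,
        ENNReal.ofReal_eq_zero.2 (by linarith), ENNReal.ofReal_zero]
    · rw [min_eq_left (by linarith), max_eq_left h2]
      congr 1; ring
  · rw [min_eq_right h, max_eq_left (le_min (by linarith) hv0),
      min_eq_right (by linarith)]
    congr 1; ring
end

section
/- Fix δ ∈ (0,1), κ > 0, ξ > 0 and let 𝒱_{δ,κ,ξ} : [0,1] → [0,1] be defined by 𝒱_{δ,κ,ξ}(u) = 1 − u − (1−δ)·exp(−κ·(−ln(u/δ))^ξ) for u ≤ δ and 𝒱_{δ,κ,ξ}(u) = u − δ·exp(−κ^{−1/ξ}·(−ln((1−u)/(1−δ)))^{1/ξ}) for u > δ. If U is uniformly distributed on [0,1], then 𝒱_{δ,κ,ξ}(U) is uniformly distributed on [0,1]; i.e., 𝒱_{δ,κ,ξ} is a uniformity-preserving transformation. -/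
/-!
For `v ∈ [0,1)` the sublevel set `{u ∈ [0,1] | 𝒱(u) ≤ v}` is an interval `[a, a + v]`, so
`𝒱(U) ≤ v` has probability `v`. On `(0, δ]` the left branch decreases continuously from `1` to
`0`, hence equals `v` at a unique `a`; on `[δ, 1)` the right branch is increasing, and it takes
the same value `v` at the dual point `a + v`. The duality holds because both branches are
built from Weibull survival functions `S_{c,p}(t) = exp (-c t^p)`, and
`S_{κ^(-1/ξ), 1/ξ}(-log S_{κ,ξ}(t)) = exp (-t)`.
-/

open Set MeasureTheory

/-- The parametric family of v-transforms `𝒱_{δ,κ,ξ}`: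
`𝒱(u) = 1 - u - (1-δ)·exp(-κ·(-ln(u/δ))^ξ)` for `u ≤ δ` and
`𝒱(u) = u - δ·exp(-κ^{-1/ξ}·(-ln((1-u)/(1-δ)))^{1/ξ})` for `u > δ`.
(The endpoint values `𝒱(0) = 𝒱(1) = 1`, which are the limiting values of the two
branches, are written explicitly since `Real.log 0 = 0` in Lean.) -/
noncomputable def Vfam (δ κ ξ : ℝ) (u : ℝ) : ℝ :=
  if u = 0 then 1
  else if u ≤ δ then 1 - u - (1 - δ) * Real.exp (-κ * (-Real.log (u / δ)) ^ ξ)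
  else if u = 1 then 1
  else u - δ * Real.exp (-(κ ^ (-1 / ξ)) * (-Real.log ((1 - u) / (1 - δ))) ^ (1 / ξ))

open Real Filter Topology

lemma map_volume_Icc_eq_self_of_preimage_Iic {f : ℝ → ℝ} (hf : Measurable f)
    (hmaps : MapsTo f (Icc 0 1) (Icc 0 1))
    (hpre : ∀ v ∈ Ico (0 : ℝ) 1, ∃ a, f ⁻¹' Iic v ∩ Icc 0 1 = Icc a (a + v)) :
    (volume.restrict (Icc (0 : ℝ) 1)).map f = volume.restrict (Icc 0 1) := by
  refine Measure.ext_of_Iic _ _ fun v => ?_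
  rw [Measure.map_apply hf measurableSet_Iic, Measure.restrict_apply (hf measurableSet_Iic),
    Measure.restrict_apply measurableSet_Iic]
  rcases lt_or_ge v 0 with hv0 | hv0
  · have hf_empty : f ⁻¹' Iic v ∩ Icc 0 1 = ∅ :=
      eq_empty_of_forall_notMem fun u hu => (hv0.trans_le (hmaps hu.2).1).not_ge hu.1
    have h_empty : Iic v ∩ Icc (0 : ℝ) 1 = ∅ :=
      eq_empty_of_forall_notMem fun u hu => (hv0.trans_le hu.2.1).not_ge hu.1
    rw [hf_empty, h_empty]
  rcases lt_or_ge v 1 with hv1 | hv1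
  · obtain ⟨a, ha⟩ := hpre v ⟨hv0, hv1⟩
    have h_Icc : Iic v ∩ Icc (0 : ℝ) 1 = Icc 0 v :=
      Set.ext fun u => ⟨fun h => ⟨h.2.1, h.1⟩, fun h => ⟨h.2, h.1, h.2.trans hv1.le⟩⟩
    rw [ha, h_Icc, Real.volume_Icc, Real.volume_Icc, add_sub_cancel_left, sub_zero]
  · have hf_all : Icc 0 1 ⊆ f ⁻¹' Iic v := fun u hu => (hmaps hu).2.trans hv1
    have h_all : Icc 0 1 ⊆ Iic v := fun u hu => hu.2.trans hv1
    rw [inter_eq_right.mpr hf_all, inter_eq_right.mpr h_all]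

noncomputable def weibullSurvival (c p t : ℝ) : ℝ := exp (-c * t ^ p)

lemma weibullSurvival_pos (c p t : ℝ) : 0 < weibullSurvival c p t := exp_pos _

lemma weibullSurvival_le_one {c p t : ℝ} (hc : 0 ≤ c) (ht : 0 ≤ t) :
    weibullSurvival c p t ≤ 1 :=
  exp_le_one_iff.mpr (by nlinarith [rpow_nonneg ht p])

lemma weibullSurvival_zero (c : ℝ) {p : ℝ} (hp : 0 < p) : weibullSurvival c p 0 = 1 := by
  simp [weibullSurvival, zero_rpow hp.ne']

lemma antitoneOn_weibullSurvival {c p : ℝ} (hc : 0 ≤ c) (hp : 0 < p) :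
    AntitoneOn (weibullSurvival c p) (Ici 0) := fun s hs _ _ hst =>
  exp_le_exp.mpr (by nlinarith [rpow_le_rpow hs hst hp.le])

lemma tendsto_weibullSurvival_atTop {c p : ℝ} (hc : 0 < c) (hp : 0 < p) :
    Tendsto (weibullSurvival c p) atTop (𝓝 0) :=
  tendsto_exp_atBot.comp ((tendsto_rpow_atTop hp).const_mul_atTop_of_neg (neg_lt_zero.mpr hc))

lemma weibullSurvival_neg_log_weibullSurvival {c p t : ℝ} (hc : 0 < c) (hp : 0 < p)
    (ht : 0 ≤ t) :
    weibullSurvival (c ^ (-1 / p)) (1 / p) (-log (weibullSurvival c p t)) = exp (-t) := by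
  have hpow : (c * t ^ p) ^ (1 / p) = c ^ (1 / p) * t := by
    rw [mul_rpow hc.le (rpow_nonneg ht p), ← rpow_mul ht, mul_one_div_cancel hp.ne', rpow_one]
  have hinv : c ^ (-1 / p) * c ^ (1 / p) = 1 := by
    rw [← rpow_add hc, neg_div, neg_add_cancel, rpow_zero]
  simp only [weibullSurvival, log_exp, neg_mul, neg_neg, hpow, ← mul_assoc, hinv, one_mul]

lemma neg_log_div_nonneg {x b : ℝ} (hx : 0 ≤ x) (hxb : x ≤ b) : 0 ≤ -log (x / b) :=
  neg_nonneg.mpr <|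
    log_nonpos (div_nonneg hx (hx.trans hxb)) (div_le_one_of_le₀ hxb (hx.trans hxb))

lemma neg_log_div_le_neg_log_div {x y b : ℝ} (hx : 0 < x) (hxy : x ≤ y) (hb : 0 < b) :
    -log (y / b) ≤ -log (x / b) :=
  neg_le_neg (log_le_log (div_pos hx hb) (div_le_div_of_nonneg_right hxy hb.le))

namespace Vfam

noncomputable def left (δ κ ξ u : ℝ) : ℝ :=
  1 - u - (1 - δ) * weibullSurvival κ ξ (-log (u / δ))

noncomputable def right (δ κ ξ u : ℝ) : ℝ :=
  u - δ * weibullSurvival (κ ^ (-1 / ξ)) (1 / ξ) (-log ((1 - u) / (1 - δ)))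

variable {δ κ ξ : ℝ}

lemma left_self (hδ : 0 < δ) (hξ : 0 < ξ) : left δ κ ξ δ = 0 := by
  rw [left, div_self hδ.ne', log_one, neg_zero, weibullSurvival_zero κ hξ]
  ring

lemma strictAntiOn_left (hδ : δ ≤ 1) (hκ : 0 ≤ κ) (hξ : 0 < ξ) :
    StrictAntiOn (left δ κ ξ) (Ioc 0 δ) := by
  intro u₁ hu₁ u₂ hu₂ h
  have hS : weibullSurvival κ ξ (-log (u₁ / δ)) ≤ weibullSurvival κ ξ (-log (u₂ / δ)) :=
    antitoneOn_weibullSurvival hκ hξ (neg_log_div_nonneg hu₂.1.le hu₂.2)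
      (neg_log_div_nonneg hu₁.1.le hu₁.2)
      (neg_log_div_le_neg_log_div hu₁.1 h.le (hu₁.1.trans_le hu₁.2))
  have := mul_le_mul_of_nonneg_left hS (sub_nonneg.mpr hδ)
  simp only [left]
  linarith

lemma strictMonoOn_right (hδ : 0 ≤ δ) (hκ : 0 ≤ κ) (hξ : 0 < ξ) :
    StrictMonoOn (right δ κ ξ) (Ico δ 1) := by
  rintro u₁ ⟨hδu₁, hu₁⟩ u₂ ⟨hδu₂, hu₂⟩ h
  have hS : weibullSurvival (κ ^ (-1 / ξ)) (1 / ξ) (-log ((1 - u₂) / (1 - δ))) ≤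
      weibullSurvival (κ ^ (-1 / ξ)) (1 / ξ) (-log ((1 - u₁) / (1 - δ))) :=
    antitoneOn_weibullSurvival (rpow_nonneg hκ _) (one_div_pos.mpr hξ)
      (neg_log_div_nonneg (by linarith) (by linarith))
      (neg_log_div_nonneg (by linarith) (by linarith))
      (neg_log_div_le_neg_log_div (by linarith) (by linarith) (by linarith))
  have := mul_le_mul_of_nonneg_left hS hδ
  simp only [right]
  linarith

lemma sub_le_left (hδ : δ ≤ 1) (hκ : 0 ≤ κ) {u : ℝ} (hu : u ∈ Ioc 0 δ) :
    δ - u ≤ left δ κ ξ u := by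
  have := mul_le_mul_of_nonneg_left
    (weibullSurvival_le_one (p := ξ) hκ (neg_log_div_nonneg hu.1.le hu.2)) (sub_nonneg.mpr hδ)
  simp only [left]
  linarith

lemma left_le_one (hδ : δ ≤ 1) {u : ℝ} (hu : 0 ≤ u) : left δ κ ξ u ≤ 1 := by
  have := mul_nonneg (sub_nonneg.mpr hδ) (weibullSurvival_pos κ ξ (-log (u / δ))).le
  simp only [left]
  linarith

lemma sub_le_right (hδ : 0 ≤ δ) (hκ : 0 ≤ κ) {u : ℝ} (hu : u ∈ Ico δ 1) :
    u - δ ≤ right δ κ ξ u := by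
  have hS := weibullSurvival_le_one (p := 1 / ξ) (rpow_nonneg hκ (-1 / ξ))
    (neg_log_div_nonneg (x := 1 - u) (b := 1 - δ) (by linarith [hu.2]) (by linarith [hu.1]))
  have := mul_le_mul_of_nonneg_left hS hδ
  simp only [right]
  linarith

lemma right_le_self (hδ : 0 ≤ δ) (u : ℝ) : right δ κ ξ u ≤ u := by
  have := mul_nonneg hδ
    (weibullSurvival_pos (κ ^ (-1 / ξ)) (1 / ξ) (-log ((1 - u) / (1 - δ)))).le
  simp only [right]
  linarith

lemma add_left (u : ℝ) :
    u + left δ κ ξ u = 1 - (1 - δ) * weibullSurvival κ ξ (-log (u / δ)) := by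
  rw [left]
  ring

lemma add_left_mem_Ico (hδ : δ < 1) (hκ : 0 ≤ κ) {u : ℝ} (hu : u ∈ Ioc 0 δ) :
    u + left δ κ ξ u ∈ Ico δ 1 := by
  have hS₀ := weibullSurvival_pos κ ξ (-log (u / δ))
  have hS₁ := weibullSurvival_le_one (p := ξ) hκ (neg_log_div_nonneg hu.1.le hu.2)
  rw [add_left]
  constructor <;> nlinarith

lemma right_add_left (hδ : δ < 1) (hκ : 0 < κ) (hξ : 0 < ξ) {u : ℝ} (hu : u ∈ Ioc 0 δ) :
    right δ κ ξ (u + left δ κ ξ u) = left δ κ ξ u := by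
  have hδ₀ : 0 < δ := hu.1.trans_le hu.2
  have hratio : (1 - (u + left δ κ ξ u)) / (1 - δ) = weibullSurvival κ ξ (-log (u / δ)) := by
    rw [add_left, sub_sub_cancel, mul_div_cancel_left₀ _ (sub_pos.mpr hδ).ne']
  rw [right, hratio, weibullSurvival_neg_log_weibullSurvival hκ hξ
    (neg_log_div_nonneg hu.1.le hu.2), neg_neg, exp_log (div_pos hu.1 hδ₀),
    mul_div_cancel₀ _ hδ₀.ne', add_sub_cancel_left]

lemma continuousOn_left (hξ : 0 < ξ) : ContinuousOn (left δ κ ξ) (Ioc 0 δ) := by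
  intro u hu
  have hδ₀ : 0 < δ := hu.1.trans_le hu.2
  unfold left weibullSurvival
  fun_prop (disch := first | positivity | exact (div_pos hu.1 hδ₀).ne' | exact Or.inr hξ.le)

lemma tendsto_left_nhdsGT_zero (hδ : 0 < δ) (hκ : 0 < κ) (hξ : 0 < ξ) :
    Tendsto (left δ κ ξ) (𝓝[>] 0) (𝓝 1) := by
  have hdiv : Tendsto (· / δ) (𝓝[>] (0 : ℝ)) (𝓝[>] 0) := by
    refine tendsto_nhdsWithin_iff.mpr
      ⟨?_, eventually_nhdsWithin_of_forall fun u hu => div_pos hu hδ⟩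
    simpa using ((continuous_id.div_const δ).tendsto 0).mono_left nhdsWithin_le_nhds
  have hlog : Tendsto (fun u => -log (u / δ)) (𝓝[>] 0) atTop :=
    tendsto_neg_atBot_atTop.comp (tendsto_log_nhdsGT_zero.comp hdiv)
  have hS := (tendsto_weibullSurvival_atTop hκ hξ).comp hlog
  have hid : Tendsto (fun u : ℝ => u) (𝓝[>] 0) (𝓝 0) :=
    tendsto_nhdsWithin_of_tendsto_nhds tendsto_id
  have h := ((tendsto_const_nhds (x := (1 : ℝ))).sub hid).sub (hS.const_mul (1 - δ))
  rw [sub_zero, mul_zero, sub_zero] at h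
  exact h

lemma exists_left_eq (hδ : δ ∈ Ioo 0 1) (hκ : 0 < κ) (hξ : 0 < ξ) {v : ℝ}
    (hv : v ∈ Ico 0 1) :
    ∃ a ∈ Ioc 0 δ, left δ κ ξ a = v := by
  have hIVT := isPreconnected_Ioc.intermediate_value_Ico (right_mem_Ioc.mpr hδ.1)
    (le_principal_iff.mpr (Ioc_mem_nhdsGT hδ.1)) (continuousOn_left hξ)
    (tendsto_left_nhdsGT_zero hδ.1 hκ hξ)
  rw [left_self hδ.1 hξ] at hIVT
  exact hIVT hv

end Vfam

section

open Vfam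

variable {δ κ ξ : ℝ}

lemma Vfam_zero : Vfam δ κ ξ 0 = 1 := if_pos rfl

lemma Vfam_one (hδ : δ < 1) : Vfam δ κ ξ 1 = 1 := by
  simp [Vfam, hδ.not_ge]

lemma Vfam_eq_left {u : ℝ} (hu : u ∈ Ioc 0 δ) : Vfam δ κ ξ u = left δ κ ξ u := by
  simp [Vfam, left, weibullSurvival, hu.1.ne', hu.2]

lemma Vfam_eq_right (hδ : 0 ≤ δ) {u : ℝ} (hu : u ∈ Ioo δ 1) :
    Vfam δ κ ξ u = right δ κ ξ u := by
  simp [Vfam, right, weibullSurvival, (hδ.trans_lt hu.1).ne', hu.1.not_ge, hu.2.ne]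

lemma measurable_Vfam : Measurable (Vfam δ κ ξ) := by
  unfold Vfam
  exact .ite (measurableSet_singleton 0) measurable_const <|
    .ite measurableSet_Iic (by fun_prop) <|
    .ite (measurableSet_singleton 1) measurable_const (by fun_prop)

lemma mapsTo_Vfam (hδ : δ ∈ Ioo 0 1) (hκ : 0 ≤ κ) :
    MapsTo (Vfam δ κ ξ) (Icc 0 1) (Icc 0 1) := by
  intro u hu
  obtain rfl | hu₀ := hu.1.eq_or_lt
  · simp [Vfam_zero]
  obtain huδ | hδu := le_or_gt u δ
  · rw [Vfam_eq_left ⟨hu₀, huδ⟩]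
    exact ⟨by linarith [sub_le_left (ξ := ξ) hδ.2.le hκ ⟨hu₀, huδ⟩],
      left_le_one hδ.2.le hu.1⟩
  obtain rfl | hu₁ := hu.2.eq_or_lt
  · simp [Vfam_one hδ.2]
  rw [Vfam_eq_right hδ.1.le ⟨hδu, hu₁⟩]
  exact ⟨by linarith [sub_le_right (ξ := ξ) hδ.1.le hκ ⟨hδu.le, hu₁⟩],
    (right_le_self hδ.1.le u).trans hu₁.le⟩

lemma Vfam_le_left_iff (hδ : δ ∈ Ioo 0 1) (hκ : 0 < κ) (hξ : 0 < ξ) {a u : ℝ}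
    (ha : a ∈ Ioc 0 δ) (hu : u ∈ Icc 0 1) :
    Vfam δ κ ξ u ≤ left δ κ ξ a ↔ u ∈ Icc a (a + left δ κ ξ a) := by
  have hw := add_left_mem_Ico (ξ := ξ) hδ.2 hκ.le ha
  have hv : left δ κ ξ a < 1 := by linarith [hw.2, ha.1]
  obtain rfl | hu₀ := hu.1.eq_or_lt
  · rw [Vfam_zero]
    exact iff_of_false hv.not_ge fun h => ha.1.not_ge h.1
  obtain huδ | hδu := le_or_gt u δ
  · rw [Vfam_eq_left ⟨hu₀, huδ⟩,
      (strictAntiOn_left hδ.2.le hκ.le hξ).le_iff_ge ⟨hu₀, huδ⟩ ha]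
    exact ⟨fun h => ⟨h, huδ.trans hw.1⟩, And.left⟩
  obtain rfl | hu₁ := hu.2.eq_or_lt
  · rw [Vfam_one hδ.2]
    exact iff_of_false hv.not_ge fun h => hw.2.not_ge h.2
  have hmono := (strictMonoOn_right hδ.1.le hκ.le hξ).le_iff_le ⟨hδu.le, hu₁⟩ hw
  rw [right_add_left hδ.2 hκ hξ ha] at hmono
  rw [Vfam_eq_right hδ.1.le ⟨hδu, hu₁⟩, hmono]
  exact ⟨fun h => ⟨ha.2.trans hδu.le, h⟩, And.right⟩

lemma Vfam_preimage_Iic (hδ : δ ∈ Ioo 0 1) (hκ : 0 < κ) (hξ : 0 < ξ) {v : ℝ}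
    (hv : v ∈ Ico 0 1) :
    ∃ a, Vfam δ κ ξ ⁻¹' Iic v ∩ Icc 0 1 = Icc a (a + v) := by
  obtain ⟨a, ha, rfl⟩ := exists_left_eq hδ hκ hξ hv
  have hw := add_left_mem_Ico (ξ := ξ) hδ.2 hκ.le ha
  refine ⟨a, Set.ext fun u => ⟨fun hu => (Vfam_le_left_iff hδ hκ hξ ha hu.2).mp hu.1,
    fun hu => ?_⟩⟩
  have hu' : u ∈ Icc 0 1 := ⟨ha.1.le.trans hu.1, hu.2.trans hw.2.le⟩
  exact ⟨(Vfam_le_left_iff hδ hκ hξ ha hu').mpr hu, hu'⟩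

end

theorem stmt_16_general {Ω : Type*} [MeasurableSpace Ω] (P : Measure Ω)
    (δ κ ξ : ℝ) (hδ : δ ∈ Set.Ioo (0:ℝ) 1) (hκ : 0 < κ) (hξ : 0 < ξ)
    (U : Ω → ℝ) (hUm : Measurable U)
    (hU : Measure.map U P = volume.restrict (Set.Icc (0:ℝ) 1)) :
    Measure.map (fun ω => Vfam δ κ ξ (U ω)) P = volume.restrict (Set.Icc (0:ℝ) 1) := by
  calc Measure.map (fun ω => Vfam δ κ ξ (U ω)) P = (P.map U).map (Vfam δ κ ξ) :=
        (Measure.map_map measurable_Vfam hUm).symm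
    _ = volume.restrict (Icc 0 1) := by
        rw [hU]
        exact map_volume_Icc_eq_self_of_preimage_Iic measurable_Vfam (mapsTo_Vfam hδ hκ.le)
          fun v hv => Vfam_preimage_Iic hδ hκ hξ hv

theorem stmt_16 {Ω : Type*} [MeasurableSpace Ω] (P : Measure Ω) [IsProbabilityMeasure P]
    (δ κ ξ : ℝ) (hδ : δ ∈ Set.Ioo (0:ℝ) 1) (hκ : 0 < κ) (hξ : 0 < ξ)
    (U : Ω → ℝ) (hUm : Measurable U)
    (hU : Measure.map U P = volume.restrict (Set.Icc (0:ℝ) 1)) :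
    Measure.map (fun ω => Vfam δ κ ξ (U ω)) P = volume.restrict (Set.Icc (0:ℝ) 1) :=
  stmt_16_general P δ κ ξ hδ hκ hξ U hUm hU
end

section
/- Let X be a random variable with absolutely continuous and strictly increasing cdf F_X on ℝ, and let T and T̃ be two volatility proxy transformations having the same change point μ_T and the same profile function g_T. Then the induced volatility PIT variables coincide: F_{T(X)}(T(X)) = F_{T̃(X)}(T̃(X)) almost surely, where F_{T(X)} and F_{T̃(X)} denote the cdfs of T(X) and T̃(X) respectively; i.e., T and T̃ induce the same v-transform. -/
/-!
STATEMENT 19: two volatility proxy transformations with the same change point and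
the same profile function induce the same volatility PIT variable:
`F_{T(X)}(T(X)) = F_{T̃(X)}(T̃(X))` almost surely.
-/

open Set MeasureTheory

theorem stmt_19 {Ω : Type*} [MeasurableSpace Ω] (P : Measure Ω) [IsProbabilityMeasure P]
    (X : Ω → ℝ) (hX : Measurable X)
    -- the cdf of `X` is absolutely continuous and strictly increasing
    (F : ℝ → ℝ) (hF : ∀ x, F x = (P {ω | X ω ≤ x}).toReal)
    (habs : Measure.map X P ≪ volume) (hFm : StrictMono F)
    -- first volatility proxy transformation `T`, change point `μT`
    (μT : ℝ) (T₁ T₂ : ℝ → ℝ)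
    (hT₁m : StrictMonoOn T₁ (Ici 0)) (hT₂m : StrictMonoOn T₂ (Ici 0))
    (hT₁c : ContinuousOn T₁ (Ici 0)) (hT₂c : ContinuousOn T₂ (Ici 0))
    (hT₁d : DifferentiableOn ℝ T₁ (Ici 0)) (hT₂d : DifferentiableOn ℝ T₂ (Ici 0))
    (hT00 : T₁ 0 = T₂ 0)
    (T : ℝ → ℝ) (hT : ∀ x, T x = if x ≤ μT then T₁ (μT - x) else T₂ (x - μT))
    -- second volatility proxy transformation `T̃`, same change point `μT`
    (S₁ S₂ : ℝ → ℝ)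
    (hS₁m : StrictMonoOn S₁ (Ici 0)) (hS₂m : StrictMonoOn S₂ (Ici 0))
    (hS₁c : ContinuousOn S₁ (Ici 0)) (hS₂c : ContinuousOn S₂ (Ici 0))
    (hS₁d : DifferentiableOn ℝ S₁ (Ici 0)) (hS₂d : DifferentiableOn ℝ S₂ (Ici 0))
    (hS00 : S₁ 0 = S₂ 0)
    (S : ℝ → ℝ) (hS : ∀ x, S x = if x ≤ μT then S₁ (μT - x) else S₂ (x - μT))
    -- `T` and `T̃` have the same profile function `g`, i.e. `T₂⁻¹∘T₁ = S₂⁻¹∘S₁ = g`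
    (g : ℝ → ℝ) (hgT : ∀ x ∈ Ici (0:ℝ), 0 ≤ g x ∧ T₂ (g x) = T₁ x)
    (hgS : ∀ x ∈ Ici (0:ℝ), S₂ (g x) = S₁ x)
    -- cdfs of `T(X)` and `T̃(X)`
    (GT GS : ℝ → ℝ)
    (hGT : ∀ t, GT t = (P {ω | T (X ω) ≤ t}).toReal)
    (hGS : ∀ t, GS t = (P {ω | S (X ω) ≤ t}).toReal) :
    ∀ᵐ ω ∂P, GT (T (X ω)) = GS (S (X ω)) := by

  have key : ∀ a b : ℝ, (T a ≤ T b ↔ S a ≤ S b) := by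
    intro a b
    rw [hT a, hT b, hS a, hS b]
    by_cases ha : a ≤ μT <;> by_cases hb : b ≤ μT <;>
      simp only [ha, hb, if_true, if_false]
    · have h1 : (0:ℝ) ≤ μT - a := by linarith
      have h2 : (0:ℝ) ≤ μT - b := by linarith
      rw [hT₁m.le_iff_le h1 h2, ← hS₁m.le_iff_le h1 h2]
    · push_neg at hb
      have h1 : (0:ℝ) ≤ μT - a := by linarith
      have h2 : (0:ℝ) ≤ b - μT := by linarith
      rw [← (hgT _ h1).2, ← hgS _ h1,
        hT₂m.le_iff_le (hgT _ h1).1 h2, ← hS₂m.le_iff_le (hgT _ h1).1 h2]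
    · push_neg at ha
      have h1 : (0:ℝ) ≤ a - μT := by linarith
      have h2 : (0:ℝ) ≤ μT - b := by linarith
      rw [← (hgT _ h2).2, ← hgS _ h2,
        hT₂m.le_iff_le h1 (hgT _ h2).1, ← hS₂m.le_iff_le h1 (hgT _ h2).1]
    · push_neg at ha hb
      have h1 : (0:ℝ) ≤ a - μT := by linarith
      have h2 : (0:ℝ) ≤ b - μT := by linarith
      rw [hT₂m.le_iff_le h1 h2, ← hS₂m.le_iff_le h1 h2]
  refine Filter.Eventually.of_forall fun ω => ?_
  rw [hGT, hGS]
  congr 2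
  ext ω'
  exact key (X ω') (X ω)
end
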